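/- arXiv:1206.0672 — 8 statements merged into one kernel-verified Lean document; each statement's English description precedes it below -/
import Mathlib

section
/- For natural numbers t, t', if there exist k₁, k₂ ∈ SL₂(R) with diag(ϖ^{-t'}, ϖ^{t'}) = k₁ · diag(ϖ^{-t}, ϖ^{t}) · k₂, then t = t' (the representatives α^t = diag(ϖ^{-t}, ϖ^{t}), t ≥ 0, lie in pairwise distinct double cosets of K\SL₂(k)/K). -/
/-!
Multiplying by `ϖ^t` makes `diag(ϖ^{-t}, ϖ^t)` integral, and integrality of a matrix over `k` is
preserved under multiplication by matrices over `R` on either side. So if `α^{t'} ∈ K α^t K`,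
the corner entry `ϖ^{t - t'}` of `ϖ^t α^{t'}` is integral, forcing `t' ≤ t`; since `K` is a
group the relation is symmetric.
-/

abbrev cartanRep {k : Type*} [Field k] (x : k) (t : ℕ) : Matrix (Fin 2) (Fin 2) k :=
  Matrix.diagonal ![x ^ (-(t : ℤ)), x ^ (t : ℤ)]

theorem smul_cartanRep_self {k : Type*} [Field k] {x : k} (hx : x ≠ 0) (t : ℕ) :
    x ^ t • cartanRep x t = Matrix.diagonal ![1, x ^ (2 * t)] := by
  ext i j
  fin_cases i <;> fin_cases j <;> simp [Matrix.diagonal, zpow_neg, hx, two_mul, pow_add]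

open Matrix in
theorem eq_map_inv_mul_mul_map_inv {n : Type*} [DecidableEq n] [Fintype n] {R S : Type*}
    [CommRing R] [CommRing S] (f : R →+* S) {X Y : Matrix n n S} (k₁ k₂ : SpecialLinearGroup n R)
    (h : Y = (k₁ : Matrix n n R).map f * X * (k₂ : Matrix n n R).map f) :
    X = ((k₁⁻¹ : SpecialLinearGroup n R) : Matrix n n R).map f * Y *
      ((k₂⁻¹ : SpecialLinearGroup n R) : Matrix n n R).map f := by
  have hinv (g : SpecialLinearGroup n R) :
      ((g⁻¹ : SpecialLinearGroup n R) : Matrix n n R).map f * (g : Matrix n n R).map f = 1 ∧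
        (g : Matrix n n R).map f * ((g⁻¹ : SpecialLinearGroup n R) : Matrix n n R).map f = 1 := by
    simp [← Matrix.map_mul, adjugate_mul, mul_adjugate]
  rw [h, ← mul_assoc, ← mul_assoc, (hinv k₁).1, one_mul, mul_assoc, (hinv k₂).2, mul_one]

section

variable {R : Type*} [CommRing R] {k : Type*} [Field k] [Algebra R k] [IsFractionRing R k]
  {ϖ : R}

theorem nonneg_of_zpow_mem_range_algebraMap (hϖ0 : ϖ ≠ 0) (hϖ : ¬IsUnit ϖ) {n : ℤ}
    (hn : algebraMap R k ϖ ^ n ∈ (algebraMap R k).range) : 0 ≤ n := by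
  by_contra! hneg
  obtain ⟨m, rfl⟩ := Int.exists_eq_neg_ofNat hneg.le
  obtain ⟨x, hx⟩ := hn
  have hm : m ≠ 0 := by omega
  have hfϖ : algebraMap R k ϖ ≠ 0 :=
    (map_ne_zero_iff _ (IsFractionRing.injective R k)).mpr hϖ0
  have hinv : x * ϖ ^ m = 1 := IsFractionRing.injective R k <| by
    rw [map_mul, map_pow, hx, map_one, zpow_neg, zpow_natCast,
      inv_mul_cancel₀ (pow_ne_zero _ hfϖ)]
  exact hϖ ((isUnit_pow_iff hm).mp (IsUnit.of_mul_eq_one_right _ hinv))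

theorem le_of_cartanRep_eq_map_mul_map (hϖ0 : ϖ ≠ 0) (hϖ : ¬IsUnit ϖ) {t t' : ℕ}
    (A B : Matrix (Fin 2) (Fin 2) R)
    (h : cartanRep (algebraMap R k ϖ) t' =
      A.map (algebraMap R k) * cartanRep (algebraMap R k ϖ) t * B.map (algebraMap R k)) :
    t' ≤ t := by
  have hfϖ : algebraMap R k ϖ ≠ 0 :=
    (map_ne_zero_iff _ (IsFractionRing.injective R k)).mpr hϖ0
  have hcorner : algebraMap R k ϖ ^ ((t : ℤ) - t') =
      ((A * Matrix.diagonal ![1, ϖ ^ (2 * t)] * B).map (algebraMap R k)) 0 0 := by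
    have hdiag : (Matrix.diagonal ![1, ϖ ^ (2 * t)]).map (algebraMap R k) =
        Matrix.diagonal ![1, algebraMap R k ϖ ^ (2 * t)] := by
      simp [Matrix.diagonal_map]
    rw [Matrix.map_mul, Matrix.map_mul, hdiag, ← smul_cartanRep_self hfϖ, mul_smul_comm,
      smul_mul_assoc, ← h]
    simp [zpow_sub₀ hfϖ, div_eq_mul_inv]
  have := nonneg_of_zpow_mem_range_algebraMap hϖ0 hϖ ⟨_, hcorner.symm⟩
  omega

end

theorem cartan_decomposition_SL2_unique_general
    (R : Type*) [CommRing R]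
    (k : Type*) [Field k] [Algebra R k] [IsFractionRing R k]
    (ϖ : R) (hϖ : Irreducible ϖ)
    (t t' : ℕ)
    (h : ∃ (k₁ k₂ : Matrix.SpecialLinearGroup (Fin 2) R),
      Matrix.diagonal ![(algebraMap R k ϖ) ^ (-(t' : ℤ)), (algebraMap R k ϖ) ^ (t' : ℤ)] =
        ((k₁ : Matrix (Fin 2) (Fin 2) R).map (algebraMap R k)) *
          Matrix.diagonal ![(algebraMap R k ϖ) ^ (-(t : ℤ)), (algebraMap R k ϖ) ^ (t : ℤ)] *
          ((k₂ : Matrix (Fin 2) (Fin 2) R).map (algebraMap R k))) :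
    t = t' := by
  obtain ⟨k₁, k₂, h⟩ := h
  exact le_antisymm
    (le_of_cartanRep_eq_map_mul_map hϖ.ne_zero hϖ.not_isUnit _ _
      (eq_map_inv_mul_mul_map_inv (algebraMap R k) k₁ k₂ h))
    (le_of_cartanRep_eq_map_mul_map hϖ.ne_zero hϖ.not_isUnit _ _ h)

/-- The Cartan representatives `α^t = diag(ϖ^{-t}, ϖ^{t})`, `t ≥ 0`, lie in pairwise
distinct double cosets of `K \ SL₂(k) / K`, where `K = SL₂(R)`. -/
theorem cartan_decomposition_SL2_unique
    (R : Type*) [CommRing R] [IsDomain R] [IsDiscreteValuationRing R]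
    [IsAdicComplete (IsLocalRing.maximalIdeal R) R]
    [Finite (IsLocalRing.ResidueField R)]
    (hodd : Odd (Nat.card (IsLocalRing.ResidueField R)))
    (k : Type*) [Field k] [Algebra R k] [IsFractionRing R k]
    (ϖ : R) (hϖ : Irreducible ϖ)
    (t t' : ℕ)
    (h : ∃ (k₁ k₂ : Matrix.SpecialLinearGroup (Fin 2) R),
      Matrix.diagonal ![(algebraMap R k ϖ) ^ (-(t' : ℤ)), (algebraMap R k ϖ) ^ (t' : ℤ)] =
        ((k₁ : Matrix (Fin 2) (Fin 2) R).map (algebraMap R k)) *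
          Matrix.diagonal ![(algebraMap R k ϖ) ^ (-(t : ℤ)), (algebraMap R k ϖ) ^ (t : ℤ)] *
          ((k₂ : Matrix (Fin 2) (Fin 2) R).map (algebraMap R k))) :
    t = t' :=
  cartan_decomposition_SL2_unique_general R k ϖ hϖ t t' h
end

section
/- Let γ₁ ∈ R^× and γ₂ ∈ R be such that δ = γ₂γ₁^{-1} is not a square in k, and let T = { [[a, bγ₁],[bγ₂, a]] : a, b ∈ k, a² − b²γ₁γ₂ = 1 } ⊆ SL₂(k). Let B^op denote the subgroup of lower triangular matrices in SL₂(R). Then a matrix g = [[g₁₁,g₁₂],[g₂₁,g₂₂]] ∈ SL₂(R) lies in the double coset B^op · T if and only if g₁₁² − δ g₁₂² = u² for some unit u ∈ R^×. -/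
/-!
Writing `g = L * T` with `L` lower triangular and `T = [[a, bγ₁], [bγ₂, a]]`, the first row of `g`
is `L₀₀ • (a, bγ₁)`, so `g₀₀² − δ g₀₁² = L₀₀² · det T = L₀₀²`, and `L₀₀` is a unit because
`L₀₀ L₁₁ = det L = 1`. Conversely, if `g₀₀² − δ g₀₁² = u²`, the torus element
`T` with first row `u⁻¹ • (g₀₀, g₀₁)` has determinant `1` over `R` itself, and `L = g · adj T`
is lower triangular with `g = L T`.
-/

/-- Membership of the anisotropic torus `T = T_{γ₁,γ₂}` as a matrix over the fraction
field `k`: the matrices `[[a, bγ₁],[bγ₂, a]]` with `a² − b²γ₁γ₂ = 1`. -/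
def InAnisotropicTorus (R k : Type*) [CommRing R] [Field k] [Algebra R k]
    (γ₁ γ₂ : R) (m : Matrix (Fin 2) (Fin 2) k) : Prop :=
  ∃ a b : k, a ^ 2 - b ^ 2 * algebraMap R k (γ₁ * γ₂) = 1 ∧
    m = !![a, b * algebraMap R k γ₁; b * algebraMap R k γ₂, a]

open Matrix

section TorusMatrix

variable {A : Type*} [CommRing A]

def torusMatrix (γ₁ γ₂ a b : A) : Matrix (Fin 2) (Fin 2) A :=
  !![a, b * γ₁; b * γ₂, a]

theorem det_torusMatrix (γ₁ γ₂ a b : A) :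
    (torusMatrix γ₁ γ₂ a b).det = a ^ 2 - b ^ 2 * (γ₁ * γ₂) := by
  rw [torusMatrix, det_fin_two_of]
  ring

theorem torusMatrix_map {B : Type*} [CommRing B] (f : A →+* B) (γ₁ γ₂ a b : A) :
    (torusMatrix γ₁ γ₂ a b).map f = torusMatrix (f γ₁) (f γ₂) (f a) (f b) := by
  ext i j
  fin_cases i <;> fin_cases j <;> simp [torusMatrix]

theorem sq_sub_mul_sq_lowerTriangular_mul_torusMatrix (L : Matrix (Fin 2) (Fin 2) A)
    (hL : L 0 1 = 0) {δ γ₁ γ₂ : A} (hδ : δ * γ₁ = γ₂) (a b : A) :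
    (L * torusMatrix γ₁ γ₂ a b) 0 0 ^ 2 - δ * (L * torusMatrix γ₁ γ₂ a b) 0 1 ^ 2 =
      L 0 0 ^ 2 * (torusMatrix γ₁ γ₂ a b).det := by
  rw [det_torusMatrix]
  simp only [torusMatrix, mul_apply, Fin.sum_univ_two, hL, of_apply,
    cons_val', cons_val_zero, cons_val_one, empty_val', cons_val_fin_one, zero_mul, add_zero]
  rw [← hδ]
  ring

theorem mul_adjugate_apply_zero_one (g T : Matrix (Fin 2) (Fin 2) A) :
    (g * T.adjugate) 0 1 = g 0 1 * T 0 0 - g 0 0 * T 0 1 := by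
  simp [adjugate_fin_two, mul_apply, Fin.sum_univ_two]
  ring

theorem isUnit_apply_zero_zero_of_det_eq_one (L : Matrix (Fin 2) (Fin 2) A)
    (hdet : L.det = 1) (hL : L 0 1 = 0) : IsUnit (L 0 0) := by
  rw [det_fin_two, hL, zero_mul, sub_zero] at hdet
  exact .of_mul_eq_one _ hdet

theorem exists_lowerTriangular_mul_torusMatrix (g : Matrix (Fin 2) (Fin 2) A) (hg : g.det = 1)
    (γ₁ : Aˣ) (γ₂ : A) (u : Aˣ) (hu : g 0 0 ^ 2 - (↑γ₁⁻¹ * γ₂) * g 0 1 ^ 2 = u ^ 2) :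
    ∃ L : Matrix (Fin 2) (Fin 2) A, L.det = 1 ∧ L 0 1 = 0 ∧
      ∃ a b : A, a ^ 2 - b ^ 2 * (γ₁ * γ₂) = 1 ∧ g = L * torusMatrix (↑γ₁) γ₂ a b := by
  set T := torusMatrix (↑γ₁) γ₂ (↑u⁻¹ * g 0 0) (↑u⁻¹ * ↑γ₁⁻¹ * g 0 1)
  have hT : T.det = 1 := by
    rw [det_torusMatrix]
    linear_combination (↑u⁻¹ : A) ^ 2 * hu - (↑u⁻¹ : A) ^ 2 * ↑γ₁⁻¹ * γ₂ * g 0 1 ^ 2 * γ₁.inv_mul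
      + (↑u⁻¹ * ↑u + 1 : A) * u.inv_mul
  refine ⟨g * T.adjugate, by rw [det_mul, hg, det_adjugate, hT, one_pow, one_mul], ?_,
    _, _, (det_torusMatrix _ _ _ _).symm.trans hT, ?_⟩
  · rw [mul_adjugate_apply_zero_one]
    simp only [T, torusMatrix, of_apply, cons_val', cons_val_zero, cons_val_one, empty_val',
      cons_val_fin_one]
    linear_combination -(↑u⁻¹ * g 0 0 * g 0 1) * γ₁.inv_mul
  · rw [Matrix.mul_assoc, adjugate_mul, hT, one_smul, Matrix.mul_one]

end TorusMatrix

theorem mem_lowerTriangular_torus_doubleCoset_iff_general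
    (R : Type*) [CommRing R]
    (k : Type*) [Field k] [Algebra R k] [IsFractionRing R k]
    (γ₁ : Rˣ) (γ₂ : R)
    (g : Matrix.SpecialLinearGroup (Fin 2) R) :
    (∃ b : Matrix.SpecialLinearGroup (Fin 2) R,
        (b : Matrix (Fin 2) (Fin 2) R) 0 1 = 0 ∧
        ∃ m : Matrix (Fin 2) (Fin 2) k, InAnisotropicTorus R k (↑γ₁) γ₂ m ∧
          ((g : Matrix (Fin 2) (Fin 2) R).map (algebraMap R k)) =
            ((b : Matrix (Fin 2) (Fin 2) R).map (algebraMap R k)) * m) ↔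
    ∃ u : Rˣ, ((g : Matrix (Fin 2) (Fin 2) R) 0 0) ^ 2 -
        ((↑γ₁⁻¹ : R) * γ₂) * ((g : Matrix (Fin 2) (Fin 2) R) 0 1) ^ 2 = (↑u : R) ^ 2 := by
  constructor
  · rintro ⟨b, hb, _, ⟨a, c, hac, rfl⟩, hg⟩
    have hδ : algebraMap R k (↑γ₁⁻¹ * γ₂) * algebraMap R k ↑γ₁ = algebraMap R k γ₂ := by
      rw [← map_mul, mul_right_comm, γ₁.inv_mul, one_mul]
    have key := sq_sub_mul_sq_lowerTriangular_mul_torusMatrix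
      ((b : Matrix (Fin 2) (Fin 2) R).map (algebraMap R k)) (by simp [hb]) hδ a c
    rw [det_torusMatrix, ← map_mul, hac, mul_one] at key
    refine ⟨(isUnit_apply_zero_zero_of_det_eq_one _ b.det_coe hb).unit,
      IsFractionRing.injective R k ?_⟩
    simpa [torusMatrix, ← hg] using key
  · rintro ⟨u, hu⟩
    obtain ⟨L, hLdet, hL, a, c, hac, hg⟩ :=
      exists_lowerTriangular_mul_torusMatrix _ g.det_coe γ₁ γ₂ u hu
    refine ⟨⟨L, hLdet⟩, hL, _, ⟨algebraMap R k a, algebraMap R k c, ?_, rfl⟩, ?_⟩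
    · rw [← map_pow, ← map_pow, ← map_mul, ← map_sub, hac, map_one]
    · rw [hg, Matrix.map_mul, torusMatrix_map]
      rfl

/-- A matrix `g ∈ SL₂(R)` lies in the double coset `B^op · T` (with `B^op` the lower
triangular subgroup of `SL₂(R)` and `T = T_{γ₁,γ₂}` the anisotropic torus attached to the
nonsquare `δ = γ₂ γ₁^{-1}`) if and only if `g₁₁² − δ g₁₂²` is the square of a unit of `R`. -/
theorem mem_lowerTriangular_torus_doubleCoset_iff
    (R : Type*) [CommRing R] [IsDomain R] [IsDiscreteValuationRing R]
    [IsAdicComplete (IsLocalRing.maximalIdeal R) R]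
    [Finite (IsLocalRing.ResidueField R)]
    (hodd : Odd (Nat.card (IsLocalRing.ResidueField R)))
    (k : Type*) [Field k] [Algebra R k] [IsFractionRing R k]
    (γ₁ : Rˣ) (γ₂ : R)
    (hδ : ¬ ∃ x : k, x ^ 2 = algebraMap R k ((↑γ₁⁻¹ : R) * γ₂))
    (g : Matrix.SpecialLinearGroup (Fin 2) R) :
    (∃ b : Matrix.SpecialLinearGroup (Fin 2) R,
        (b : Matrix (Fin 2) (Fin 2) R) 0 1 = 0 ∧
        ∃ m : Matrix (Fin 2) (Fin 2) k, InAnisotropicTorus R k (↑γ₁) γ₂ m ∧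
          ((g : Matrix (Fin 2) (Fin 2) R).map (algebraMap R k)) =
            ((b : Matrix (Fin 2) (Fin 2) R).map (algebraMap R k)) * m) ↔
    ∃ u : Rˣ, ((g : Matrix (Fin 2) (Fin 2) R) 0 0) ^ 2 -
        ((↑γ₁⁻¹ : R) * γ₂) * ((g : Matrix (Fin 2) (Fin 2) R) 0 1) ^ 2 = (↑u : R) ^ 2 :=
  mem_lowerTriangular_torus_doubleCoset_iff_general R k γ₁ γ₂ g
end

section
/- Let γ₁ ∈ R^× and γ₂ ∈ R with val(γ₂γ₁^{-1}) = 1 (the ramified case), let T = { [[a, bγ₁],[bγ₂, a]] : a, b ∈ k, a² − b²γ₁γ₂ = 1 } ⊆ SL₂(k), let B^op denote the subgroup of lower triangular matrices in SL₂(R), and let w = [[0,1],[−1,0]]. Then SL₂(R) is the disjoint union of the two double cosets B^op·T and B^op·w·T. -/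
open IsLocalRing Polynomial Matrix
open scoped MatrixGroups

section Hensel

variable {R : Type*} [CommRing R] [IsLocalRing R]

lemma isUnit_two_of_odd_card_residueField [Finite (ResidueField R)]
    (hodd : Odd (Nat.card (ResidueField R))) : IsUnit (2 : R) := by
  have := Fintype.ofFinite (ResidueField R)
  have hchar : ringChar (ResidueField R) ≠ 2 := fun h => by
    rw [Nat.card_eq_fintype_card, Nat.odd_iff, FiniteField.even_card_of_char_two h] at hodd
    exact zero_ne_one hodd
  rw [← notMem_maximalIdeal, ← residue_eq_zero_iff, map_ofNat]
  exact Ring.two_ne_zero hchar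

variable [HenselianRing R (maximalIdeal R)]

lemma exists_unit_sq_eq_of_sub_one_mem (h2 : IsUnit (2 : R)) {u : R}
    (hu : u - 1 ∈ maximalIdeal R) : ∃ x : Rˣ, (x : R) ^ 2 = u := by
  have hf : (X ^ 2 - C u).eval 1 ∈ maximalIdeal R := by simpa using neg_mem hu
  have hf' : IsUnit
      (Ideal.Quotient.mk (maximalIdeal R) ((X ^ 2 - C u : R[X]).derivative.eval 1)) := by
    simpa [one_add_one_eq_two] using h2.map (Ideal.Quotient.mk (maximalIdeal R))
  obtain ⟨x, hroot, hx⟩ :=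
    HenselianRing.is_henselian (X ^ 2 - C u) (monic_X_pow_sub_C u two_ne_zero) 1 hf hf'
  have hxu : IsUnit x := by simpa using isUnit_one_sub_self_of_mem_nonunits _ (neg_mem hx)
  exact ⟨hxu.unit, by simpa [sub_eq_zero] using hroot⟩

lemma exists_sq_sub_sq_mul_eq_one_of_isUnit (h2 : IsUnit (2 : R)) {π : R}
    (hπ : π ∈ maximalIdeal R) {p : R} (hp : IsUnit p) (q : R) :
    ∃ a c : R, a ^ 2 - c ^ 2 * π = 1 ∧ p * c = q * a := by
  obtain ⟨P, rfl⟩ := hp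
  obtain ⟨x, hx⟩ := exists_unit_sq_eq_of_sub_one_mem h2 (u := 1 - (q * ↑P⁻¹) ^ 2 * π)
    (by rw [sub_sub_cancel_left]; exact neg_mem (Ideal.mul_mem_left _ _ hπ))
  refine ⟨↑x⁻¹, q * ↑P⁻¹ * ↑x⁻¹, ?_, ?_⟩
  · linear_combination (-(↑x⁻¹ : R) ^ 2) * hx + ((x : R) * ↑x⁻¹ + 1) * x.mul_inv
  · linear_combination q * ↑x⁻¹ * P.mul_inv

end Hensel

section LowerTriangular

variable {R : Type*} [CommRing R]

lemma exists_lowerTriangular_mul_eq (g h : SL(2, R)) (hgh : g 0 0 * h 0 1 = g 0 1 * h 0 0) :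
    ∃ b : SL(2, R), b 0 1 = 0 ∧ g = b * h :=
  ⟨g * h⁻¹, by
    simp [adjugate_fin_two, mul_apply, Fin.sum_univ_two]
    linear_combination -hgh, by group⟩

/-- The torus of the statement in the coordinates `c = bγ₁`, `π = γ₁⁻¹γ₂`. -/
def torusElement (π a c : R) (h : a ^ 2 - c ^ 2 * π = 1) : SL(2, R) :=
  ⟨!![a, c; c * π, a], by rw [det_fin_two_of]; linear_combination h⟩

@[simp]
lemma coe_torusElement (π a c : R) (h : a ^ 2 - c ^ 2 * π = 1) :
    (torusElement π a c h : Matrix (Fin 2) (Fin 2) R) = !![a, c; c * π, a] :=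
  rfl

def weylElement : SL(2, R) :=
  ⟨!![0, 1; -1, 0], by simp⟩

@[simp]
lemma coe_weylElement : ((weylElement : SL(2, R)) : Matrix (Fin 2) (Fin 2) R) = !![0, 1; -1, 0] :=
  rfl

lemma map_weylMatrix {S : Type*} [Ring S] (f : R →+* S) :
    (!![0, 1; -1, 0] : Matrix (Fin 2) (Fin 2) R).map f = !![0, 1; -1, 0] := by
  ext i j
  fin_cases i <;> fin_cases j <;> simp

end LowerTriangular

section DoubleCosets

variable {R : Type*} [CommRing R] [IsLocalRing R] [HenselianRing R (maximalIdeal R)] {π : R}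

lemma exists_lowerTriangular_mul_torusElement (h2 : IsUnit (2 : R)) (hπ : π ∈ maximalIdeal R)
    (g : SL(2, R)) (hg : IsUnit (g 0 0)) :
    ∃ b : SL(2, R), b 0 1 = 0 ∧ ∃ a c h, g = b * torusElement π a c h := by
  obtain ⟨a, c, h, hac⟩ := exists_sq_sub_sq_mul_eq_one_of_isUnit h2 hπ hg (g 0 1)
  obtain ⟨b, hb, rfl⟩ :=
    exists_lowerTriangular_mul_eq g (torusElement π a c h) (by simpa using hac)
  exact ⟨b, hb, a, c, h, rfl⟩

lemma exists_lowerTriangular_mul_weylElement_mul_torusElement (h2 : IsUnit (2 : R))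
    (hπ : maximalIdeal R = Ideal.span {π}) (g : SL(2, R)) (hg : g 0 0 ∈ maximalIdeal R) :
    ∃ b : SL(2, R), b 0 1 = 0 ∧ ∃ a c h, g = b * weylElement * torusElement π a c h := by
  obtain ⟨r, hr⟩ := Ideal.mem_span_singleton'.mp (hπ ▸ hg)
  have hdet : g 0 0 * g 1 1 - g 0 1 * g 1 0 = 1 := by
    rw [← det_fin_two]; exact g.prop
  have hB : IsUnit (g 0 1) := by
    by_contra hB
    refine (maximalIdeal.isMaximal R).ne_top ((Ideal.eq_top_iff_one _).mpr ?_)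
    rw [← hdet]
    exact sub_mem (Ideal.mul_mem_right _ _ hg) (Ideal.mul_mem_right _ _ hB)
  obtain ⟨a, c, h, hac⟩ :=
    exists_sq_sub_sq_mul_eq_one_of_isUnit h2 (hπ ▸ Ideal.mem_span_singleton_self π) hB r
  obtain ⟨b, hb, hgb⟩ := exists_lowerTriangular_mul_eq g (weylElement * torusElement π a c h) (by
    simp [mul_apply, Fin.sum_univ_two, ← hr]
    linear_combination -π * hac)
  exact ⟨b, hb, a, c, h, by rw [hgb, mul_assoc]⟩

end DoubleCosets

def firstRowForm {S : Type*} [CommRing S] (γ₁ γ₂ : S) (M : Matrix (Fin 2) (Fin 2) S) : S :=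
  γ₁ * M 0 0 ^ 2 - γ₂ * M 0 1 ^ 2

lemma firstRowForm_lowerTriangular_mul {S : Type*} [CommRing S] (γ₁ γ₂ : S)
    {b : Matrix (Fin 2) (Fin 2) S} (hb : b 0 1 = 0) (M : Matrix (Fin 2) (Fin 2) S) :
    firstRowForm γ₁ γ₂ (b * M) = b 0 0 ^ 2 * firstRowForm γ₁ γ₂ M := by
  simp only [firstRowForm, mul_apply, Fin.sum_univ_two, hb]
  ring

section Torus

variable {R k : Type*} [CommRing R] [Field k] [Algebra R k] {γ₁ γ₂ : R}
  {m : Matrix (Fin 2) (Fin 2) k}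

lemma InAnisotropicTorus.firstRowForm_eq (hm : InAnisotropicTorus R k γ₁ γ₂ m) :
    firstRowForm (algebraMap R k γ₁) (algebraMap R k γ₂) m = algebraMap R k γ₁ := by
  obtain ⟨a, b, hab, rfl⟩ := hm
  simp only [firstRowForm, of_apply, cons_val', cons_val_zero, cons_val_one, empty_val',
    cons_val_fin_one, map_mul] at hab ⊢
  linear_combination algebraMap R k γ₁ * hab

lemma InAnisotropicTorus.firstRowForm_weyl_mul_eq (hm : InAnisotropicTorus R k γ₁ γ₂ m) :
    firstRowForm (algebraMap R k γ₁) (algebraMap R k γ₂) (!![0, 1; -1, 0] * m) =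
      -algebraMap R k γ₂ := by
  obtain ⟨a, b, hab, rfl⟩ := hm
  rw [mul_fin_two]
  simp only [firstRowForm, of_apply, cons_val', cons_val_zero, cons_val_one, empty_val',
    cons_val_fin_one, map_mul] at hab ⊢
  linear_combination -algebraMap R k γ₂ * hab

end Torus

lemma inAnisotropicTorus_map_torusElement {R : Type*} (k : Type*) [CommRing R] [Field k]
    [Algebra R k] (γ₁ : Rˣ) (γ₂ : R) {a c : R} (h : a ^ 2 - c ^ 2 * (↑γ₁⁻¹ * γ₂) = 1) :
    InAnisotropicTorus R k γ₁ γ₂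
      ((torusElement _ a c h : Matrix (Fin 2) (Fin 2) R).map (algebraMap R k)) := by
  refine ⟨algebraMap R k a, algebraMap R k (c * ↑γ₁⁻¹), ?_, ?_⟩
  · rw [← map_pow, ← map_pow, ← map_mul, ← map_sub, ← map_one (algebraMap R k)]
    congr 1
    linear_combination h - c ^ 2 * ↑γ₁⁻¹ * γ₂ * γ₁.inv_mul
  · ext i j
    fin_cases i <;> fin_cases j <;> simp [← map_mul, mul_assoc]

lemma lowerTriangular_mul_ne_lowerTriangular_mul_weyl_mul {R k : Type*} [CommRing R] [Field k]
    [Algebra R k] [FaithfulSMul R k] {γ₁ γ₂ : R} (hγ₁ : IsUnit γ₁) (hγ₂ : ¬IsUnit γ₂)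
    {b b' : SL(2, R)} (hb : b 0 1 = 0) (hb' : b' 0 1 = 0) {m m' : Matrix (Fin 2) (Fin 2) k}
    (hm : InAnisotropicTorus R k γ₁ γ₂ m) (hm' : InAnisotropicTorus R k γ₁ γ₂ m') :
    (b : Matrix (Fin 2) (Fin 2) R).map (algebraMap R k) * m ≠
      (b' : Matrix (Fin 2) (Fin 2) R).map (algebraMap R k) * !![0, 1; -1, 0] * m' := by
  intro h
  have hform := congrArg (firstRowForm (algebraMap R k γ₁) (algebraMap R k γ₂)) h
  rw [mul_assoc, firstRowForm_lowerTriangular_mul _ _ (by simp [hb]),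
    firstRowForm_lowerTriangular_mul _ _ (by simp [hb']), hm.firstRowForm_eq,
    hm'.firstRowForm_weyl_mul_eq] at hform
  have hR : b 0 0 ^ 2 * γ₁ = -(b' 0 0 ^ 2 * γ₂) :=
    FaithfulSMul.algebraMap_injective R k (by simpa using hform)
  have hb₀ : IsUnit (b 0 0) := by
    have hdet := b.prop
    rw [det_fin_two] at hdet
    exact IsUnit.of_mul_eq_one _ (by simpa [hb] using hdet)
  exact hγ₂ (isUnit_of_mul_isUnit_right (x := b' 0 0 ^ 2)
    (by simpa [hR] using ((hb₀.pow 2).mul hγ₁).neg))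

/-- In the ramified case (`val(γ₂γ₁^{-1}) = 1`), `SL₂(R)` is the disjoint union of the
two double cosets `B^op · T` and `B^op · w · T`, where `B^op` is the lower triangular
subgroup of `SL₂(R)` and `w = [[0,1],[-1,0]]`. -/
theorem lowerTriangular_torus_doubleCosets_ramified
    (R : Type*) [CommRing R] [IsDomain R] [IsDiscreteValuationRing R]
    [IsAdicComplete (IsLocalRing.maximalIdeal R) R]
    [Finite (IsLocalRing.ResidueField R)]
    (hodd : Odd (Nat.card (IsLocalRing.ResidueField R)))
    (k : Type*) [Field k] [Algebra R k] [IsFractionRing R k]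
    (γ₁ : Rˣ) (γ₂ : R)
    (hram : Irreducible ((↑γ₁⁻¹ : R) * γ₂)) :
    (∀ g : Matrix.SpecialLinearGroup (Fin 2) R,
      (∃ b : Matrix.SpecialLinearGroup (Fin 2) R,
        (b : Matrix (Fin 2) (Fin 2) R) 0 1 = 0 ∧
        ∃ m : Matrix (Fin 2) (Fin 2) k, InAnisotropicTorus R k (↑γ₁) γ₂ m ∧
          ((g : Matrix (Fin 2) (Fin 2) R).map (algebraMap R k)) =
            ((b : Matrix (Fin 2) (Fin 2) R).map (algebraMap R k)) * m) ∨
      (∃ b : Matrix.SpecialLinearGroup (Fin 2) R,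
        (b : Matrix (Fin 2) (Fin 2) R) 0 1 = 0 ∧
        ∃ m : Matrix (Fin 2) (Fin 2) k, InAnisotropicTorus R k (↑γ₁) γ₂ m ∧
          ((g : Matrix (Fin 2) (Fin 2) R).map (algebraMap R k)) =
            ((b : Matrix (Fin 2) (Fin 2) R).map (algebraMap R k)) *
              (!![0, 1; -1, 0] : Matrix (Fin 2) (Fin 2) k) * m)) ∧
    (∀ g : Matrix.SpecialLinearGroup (Fin 2) R,
      ¬ ((∃ b : Matrix.SpecialLinearGroup (Fin 2) R,
        (b : Matrix (Fin 2) (Fin 2) R) 0 1 = 0 ∧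
        ∃ m : Matrix (Fin 2) (Fin 2) k, InAnisotropicTorus R k (↑γ₁) γ₂ m ∧
          ((g : Matrix (Fin 2) (Fin 2) R).map (algebraMap R k)) =
            ((b : Matrix (Fin 2) (Fin 2) R).map (algebraMap R k)) * m) ∧
      (∃ b : Matrix.SpecialLinearGroup (Fin 2) R,
        (b : Matrix (Fin 2) (Fin 2) R) 0 1 = 0 ∧
        ∃ m : Matrix (Fin 2) (Fin 2) k, InAnisotropicTorus R k (↑γ₁) γ₂ m ∧
          ((g : Matrix (Fin 2) (Fin 2) R).map (algebraMap R k)) =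
            ((b : Matrix (Fin 2) (Fin 2) R).map (algebraMap R k)) *
              (!![0, 1; -1, 0] : Matrix (Fin 2) (Fin 2) k) * m))) := by
  have h2 : IsUnit (2 : R) := isUnit_two_of_odd_card_residueField hodd
  have hπ := hram.maximalIdeal_eq
  have hγ₂ : ¬IsUnit γ₂ := fun h => hram.not_isUnit (γ₁⁻¹.isUnit.mul h)
  refine ⟨fun g => ?_, fun g ⟨⟨b, hb, m, hm, hg⟩, ⟨b', hb', m', hm', hg'⟩⟩ =>
    lowerTriangular_mul_ne_lowerTriangular_mul_weyl_mul γ₁.isUnit hγ₂ hb hb' hm hm'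
      (hg.symm.trans hg')⟩
  by_cases hA : IsUnit (g 0 0)
  · obtain ⟨b, hb, a, c, h, rfl⟩ := exists_lowerTriangular_mul_torusElement h2
      (hπ ▸ Ideal.mem_span_singleton_self _) g hA
    exact Or.inl ⟨b, hb, _, inAnisotropicTorus_map_torusElement k γ₁ γ₂ h, by simp⟩
  · obtain ⟨b, hb, a, c, h, rfl⟩ := exists_lowerTriangular_mul_weylElement_mul_torusElement h2
      hπ g ((mem_maximalIdeal _).mpr hA)
    exact Or.inr
      ⟨b, hb, _, inAnisotropicTorus_map_torusElement k γ₁ γ₂ h, by simp [map_weylMatrix]⟩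
end

section
/- Let ε ∈ R^× be a unit whose image in the residue field κ is not a square, let T = { [[a, b],[bε, a]] : a, b ∈ k, a² − εb² = 1 } ⊆ SL₂(k), and let B^op denote the subgroup of lower triangular matrices in SL₂(R). Suppose x, y ∈ R satisfy x² − εy² = ε, and set e = [[x, y],[y, ε^{-1}x]] (which lies in SL₂(R)). Then SL₂(R) is the disjoint union of the two double cosets B^op·T and B^op·e·T. -/
/-!
The invariant separating the two double cosets is the norm `N(g) = g₀₀² - ε g₀₁²` of
`g₀₀ + g₀₁ √ε`, read off the first row of `g`. Right multiplication by `T` multiplies that row by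
an element of norm one, and left multiplication by `b ∈ B^op` scales it by `b₀₀ ∈ R^×`, so
`N(b g m) = b₀₀² N(g)`. Since `ε` is a nonsquare mod `P` and the first row of `g ∈ SL₂(R)` is
primitive, `N(g)` is a unit, and its class in `R^× / (R^×)²` is well defined on double cosets; it is
`1` on `B^op T` and `ε` on `B^op e T`, which gives disjointness. Conversely `R^× / (R^×)² = {1, ε}`
by Hensel's lemma and the finiteness of `κ`, and if `N(g) = u² N(h)` then
`a + c √ε = u (g₀₀ + g₀₁ √ε)(h₀₀ - h₀₁ √ε) / N(g)` has norm one and entries in `R`, and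
`g (h m)⁻¹` is lower triangular because the first rows of `g` and `h m` are proportional.
-/

/-- Membership of the unramified anisotropic torus `T = T_{1,ε}` as a matrix over the
fraction field `k`: the matrices `[[a, b],[bε, a]]` with `a² − εb² = 1`. -/
def InUnramifiedTorus (R k : Type*) [CommRing R] [Field k] [Algebra R k]
    (ε : R) (m : Matrix (Fin 2) (Fin 2) k) : Prop :=
  ∃ a b : k, a ^ 2 - algebraMap R k ε * b ^ 2 = 1 ∧
    m = !![a, b; b * algebraMap R k ε, a]

open IsLocalRing Matrix

lemma Ring.two_ne_zero_of_odd_natCard {F : Type*} [Field F] [Finite F] (h : Odd (Nat.card F)) :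
    (2 : F) ≠ 0 := by
  have := Fintype.ofFinite F
  refine Ring.two_ne_zero fun h2 => ?_
  rw [Nat.card_eq_fintype_card, Nat.odd_iff, ← Nat.mod_two_ne_zero] at h
  exact h (FiniteField.even_card_iff_char_two.mp h2)

lemma FiniteField.isSquare_mul_of_not_isSquare {F : Type*} [Field F] [Finite F] {a b : F}
    (ha : ¬IsSquare a) (hb : ¬IsSquare b) : IsSquare (a * b) := by
  classical
  have := Fintype.ofFinite F
  have hab : a * b ≠ 0 := mul_ne_zero (by rintro rfl; exact ha ⟨0, by simp⟩)
    (by rintro rfl; exact hb ⟨0, by simp⟩)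
  rw [← quadraticChar_one_iff_isSquare hab, map_mul, quadraticChar_neg_one_iff_not_isSquare.mpr ha,
    quadraticChar_neg_one_iff_not_isSquare.mpr hb, neg_one_mul, neg_neg]

lemma sq_sub_mul_sq_ne_zero {F : Type*} [Field F] {ε a b : F} (hε : ¬IsSquare ε)
    (hab : a ≠ 0 ∨ b ≠ 0) : a ^ 2 - ε * b ^ 2 ≠ 0 := by
  intro h
  by_cases hb : b = 0
  · subst hb
    exact hab.resolve_right (not_not.mpr rfl) (by simpa using h)
  · exact hε ⟨a / b, by field_simp; linear_combination -h⟩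

lemma isSquare_of_sq_eq_sq_mul {R : Type*} [CommRing R] {a b ε : R} (hb : IsUnit b)
    (h : a ^ 2 = b ^ 2 * ε) : IsSquare ε := by
  obtain ⟨b', hb'⟩ := hb.exists_left_inv
  exact ⟨a * b', by linear_combination -(ε * (b' * b + 1)) * hb' - b' ^ 2 * h⟩

open Polynomial in
lemma IsLocalRing.isSquare_of_isSquare_residue {R : Type*} [CommRing R] [IsLocalRing R]
    [HenselianRing R (maximalIdeal R)] (h2 : (2 : ResidueField R) ≠ 0) {d : R} (hd : IsUnit d)
    (hs : IsSquare (residue R d)) : IsSquare d := by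
  obtain ⟨t, ht⟩ := hs
  obtain ⟨a₀, rfl⟩ := residue_surjective t
  have ha₀ : residue R a₀ ≠ 0 := by
    intro h0
    have := (hd.map (residue R)).ne_zero
    rw [ht, h0, mul_zero] at this
    exact this rfl
  have hroot : (X ^ 2 - C d).eval a₀ ∈ maximalIdeal R := by
    rw [← residue_eq_zero_iff]
    simp only [eval_sub, eval_pow, eval_X, eval_C, map_sub, map_pow, ht]
    ring
  have hsimple :
      IsUnit (Ideal.Quotient.mk (maximalIdeal R) ((X ^ 2 - C d).derivative.eval a₀)) := by
    have hder : (X ^ 2 - C d).derivative.eval a₀ = 2 * a₀ := by simp; ring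
    change IsUnit (residue R _)
    rw [hder, map_mul, map_ofNat]
    exact (mul_ne_zero h2 ha₀).isUnit
  obtain ⟨a, ha, -⟩ := HenselianRing.is_henselian (X ^ 2 - C d) (monic_X_pow_sub_C d two_ne_zero)
    a₀ hroot hsimple
  exact ⟨a, by simpa [sq, sub_eq_zero, eq_comm] using ha⟩

def firstRowNorm {R : Type*} [CommRing R] (ε : R) (g : Matrix (Fin 2) (Fin 2) R) : R :=
  g 0 0 ^ 2 - ε * g 0 1 ^ 2

section firstRowNorm

variable {R : Type*} [CommRing R] (ε : R)

@[simp]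
lemma firstRowNorm_one : firstRowNorm ε 1 = 1 := by
  simp [firstRowNorm]

lemma firstRowNorm_map {S : Type*} [CommRing S] (f : R →+* S) (g : Matrix (Fin 2) (Fin 2) R) :
    firstRowNorm (f ε) (g.map f) = f (firstRowNorm ε g) := by
  simp [firstRowNorm]

lemma firstRowNorm_lowerTriangular_mul {b : Matrix (Fin 2) (Fin 2) R} (hb : b 0 1 = 0)
    (g : Matrix (Fin 2) (Fin 2) R) : firstRowNorm ε (b * g) = b 0 0 ^ 2 * firstRowNorm ε g := by
  simp only [firstRowNorm, mul_apply, Fin.sum_univ_two, hb, zero_mul, add_zero]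
  ring

/-- Right multiplication by `!![a, c; c * ε, a]` multiplies each row, read as `x + y √ε`,
by `a + c √ε`. -/
lemma firstRowNorm_mul_torus (g : Matrix (Fin 2) (Fin 2) R) (a c : R) :
    firstRowNorm ε (g * !![a, c; c * ε, a]) = firstRowNorm ε g * (a ^ 2 - ε * c ^ 2) := by
  simp only [firstRowNorm, mul_apply, of_apply, cons_val', cons_val_zero, cons_val_fin_one,
    Fin.sum_univ_two, cons_val_one]
  ring

end firstRowNorm

lemma isUnit_firstRowNorm {R : Type*} [CommRing R] [IsLocalRing R] {ε : R}
    (hε : ¬IsSquare (residue R ε)) {g : Matrix (Fin 2) (Fin 2) R} (hg : g.det = 1) :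
    IsUnit (firstRowNorm ε g) := by
  have hrow : residue R (g 0 0) ≠ 0 ∨ residue R (g 0 1) ≠ 0 := by
    by_contra! h
    have := congrArg (residue R) hg
    simp [det_fin_two, h.1, h.2] at this
  rw [← residue_ne_zero_iff_isUnit]
  simpa [firstRowNorm] using sq_sub_mul_sq_ne_zero hε hrow

lemma Matrix.SpecialLinearGroup.isUnit_apply_zero_zero_of_apply_zero_one {R : Type*}
    [CommRing R] {b : SpecialLinearGroup (Fin 2) R}
    (hb : (b : Matrix (Fin 2) (Fin 2) R) 0 1 = 0) :
    IsUnit ((b : Matrix (Fin 2) (Fin 2) R) 0 0) := by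
  have hdet := b.2
  rw [det_fin_two, hb, zero_mul, sub_zero] at hdet
  exact IsUnit.of_mul_eq_one _ hdet

lemma exists_eq_mul_mul_torus_of_firstRowNorm_eq {R : Type*} [CommRing R] {ε u : R}
    {g h : SpecialLinearGroup (Fin 2) R} (hg : IsUnit (firstRowNorm ε g))
    (hgh : firstRowNorm ε g = u ^ 2 * firstRowNorm ε h) :
    ∃ b : SpecialLinearGroup (Fin 2) R, (b : Matrix (Fin 2) (Fin 2) R) 0 1 = 0 ∧
      ∃ a c : R, a ^ 2 - ε * c ^ 2 = 1 ∧
        (g : Matrix (Fin 2) (Fin 2) R) = b * h * !![a, c; c * ε, a] := by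
  obtain ⟨w, hw⟩ := hg.exists_left_inv
  set a := w * u * (g 0 0 * h 0 0 - ε * g 0 1 * h 0 1) with ha
  set c := w * u * (g 0 1 * h 0 0 - g 0 0 * h 0 1) with hc
  have hac : a ^ 2 - ε * c ^ 2 = 1 := by
    simp only [firstRowNorm] at hw hgh
    linear_combination (-w ^ 2 * (g 0 0 ^ 2 - ε * g 0 1 ^ 2)) * hgh +
      (w * (g 0 0 ^ 2 - ε * g 0 1 ^ 2) + 1) * hw
  set T : Matrix (Fin 2) (Fin 2) R := !![a, c; c * ε, a] with hT
  let M : SpecialLinearGroup (Fin 2) R := ⟨T, by rw [hT, det_fin_two_of]; linear_combination hac⟩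
  refine ⟨g * (h * M)⁻¹, ?_, a, c, hac, ?_⟩
  · change ((g : Matrix (Fin 2) (Fin 2) R) * adjugate ((h : Matrix (Fin 2) (Fin 2) R) * T)) 0 1 = 0
    simp only [hT, ha, hc, adjugate_fin_two, mul_apply, of_apply, cons_val', cons_val_one,
      cons_val_fin_one, Fin.sum_univ_two, cons_val_zero, neg_add_rev]
    ring
  · have : g = g * (h * M)⁻¹ * h * M := by group
    exact congrArg (fun g : SpecialLinearGroup (Fin 2) R => (g : Matrix (Fin 2) (Fin 2) R)) this

section fractionField

variable {R k : Type*} [CommRing R] [Field k] [Algebra R k] {ε : R}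

lemma InUnramifiedTorus.firstRowNorm_mul {m : Matrix (Fin 2) (Fin 2) k}
    (hm : InUnramifiedTorus R k ε m) (p : Matrix (Fin 2) (Fin 2) k) :
    firstRowNorm (algebraMap R k ε) (p * m) = firstRowNorm (algebraMap R k ε) p := by
  obtain ⟨a, c, hac, rfl⟩ := hm
  rw [firstRowNorm_mul_torus, hac, mul_one]

lemma inUnramifiedTorus_map {a c : R} (hac : a ^ 2 - ε * c ^ 2 = 1) :
    InUnramifiedTorus R k ε ((!![a, c; c * ε, a]).map (algebraMap R k)) :=
  ⟨algebraMap R k a, algebraMap R k c, by simpa using congrArg (algebraMap R k) hac,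
    by ext i j; fin_cases i <;> fin_cases j <;> simp⟩

lemma exists_map_eq_mul_mul_inUnramifiedTorus_of_firstRowNorm_eq {u : R}
    {g h : SpecialLinearGroup (Fin 2) R} (hg : IsUnit (firstRowNorm ε g))
    (hgh : firstRowNorm ε g = u ^ 2 * firstRowNorm ε h) :
    ∃ b : SpecialLinearGroup (Fin 2) R, (b : Matrix (Fin 2) (Fin 2) R) 0 1 = 0 ∧
      ∃ m : Matrix (Fin 2) (Fin 2) k, InUnramifiedTorus R k ε m ∧
        (g : Matrix (Fin 2) (Fin 2) R).map (algebraMap R k) =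
          (b : Matrix (Fin 2) (Fin 2) R).map (algebraMap R k) *
            (h : Matrix (Fin 2) (Fin 2) R).map (algebraMap R k) * m := by
  obtain ⟨b, hb, a, c, hac, hg⟩ := exists_eq_mul_mul_torus_of_firstRowNorm_eq hg hgh
  refine ⟨b, hb, _, inUnramifiedTorus_map hac, ?_⟩
  rw [hg, Matrix.map_mul, Matrix.map_mul]

lemma firstRowNorm_eq_of_map_eq_mul_mul (hinj : Function.Injective (algebraMap R k))
    {g b h : Matrix (Fin 2) (Fin 2) R} (hb : b 0 1 = 0) {m : Matrix (Fin 2) (Fin 2) k}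
    (hm : InUnramifiedTorus R k ε m)
    (hgbm : g.map (algebraMap R k) = b.map (algebraMap R k) * h.map (algebraMap R k) * m) :
    firstRowNorm ε g = b 0 0 ^ 2 * firstRowNorm ε h := by
  apply hinj
  rw [← firstRowNorm_map, hgbm, hm.firstRowNorm_mul, ← Matrix.map_mul, firstRowNorm_map,
    firstRowNorm_lowerTriangular_mul ε hb]

end fractionField

/-- In the unramified case (`ε` a unit whose image in the residue field is a nonsquare),
with `e = [[x,y],[y,ε^{-1}x]]` for a solution of `x² − εy² = ε` (so `e ∈ SL₂(R)`),
`SL₂(R)` is the disjoint union of the two double cosets `B^op · T` and `B^op · e · T`. -/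
theorem lowerTriangular_torus_doubleCosets_unramified
    (R : Type*) [CommRing R] [IsDomain R] [IsDiscreteValuationRing R]
    [IsAdicComplete (IsLocalRing.maximalIdeal R) R]
    [Finite (IsLocalRing.ResidueField R)]
    (hodd : Odd (Nat.card (IsLocalRing.ResidueField R)))
    (k : Type*) [Field k] [Algebra R k] [IsFractionRing R k]
    (ε : Rˣ) (hε : ¬ IsSquare (IsLocalRing.residue R (↑ε : R)))
    (x y : R) (hxy : x ^ 2 - (↑ε : R) * y ^ 2 = (↑ε : R)) :
    (!![x, y; y, (↑ε⁻¹ : R) * x] : Matrix (Fin 2) (Fin 2) R).det = 1 ∧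
    (∀ g : Matrix.SpecialLinearGroup (Fin 2) R,
      (∃ b : Matrix.SpecialLinearGroup (Fin 2) R,
        (b : Matrix (Fin 2) (Fin 2) R) 0 1 = 0 ∧
        ∃ m : Matrix (Fin 2) (Fin 2) k, InUnramifiedTorus R k (↑ε) m ∧
          ((g : Matrix (Fin 2) (Fin 2) R).map (algebraMap R k)) =
            ((b : Matrix (Fin 2) (Fin 2) R).map (algebraMap R k)) * m) ∨
      (∃ b : Matrix.SpecialLinearGroup (Fin 2) R,
        (b : Matrix (Fin 2) (Fin 2) R) 0 1 = 0 ∧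
        ∃ m : Matrix (Fin 2) (Fin 2) k, InUnramifiedTorus R k (↑ε) m ∧
          ((g : Matrix (Fin 2) (Fin 2) R).map (algebraMap R k)) =
            ((b : Matrix (Fin 2) (Fin 2) R).map (algebraMap R k)) *
              ((!![x, y; y, (↑ε⁻¹ : R) * x] : Matrix (Fin 2) (Fin 2) R).map (algebraMap R k)) *
              m)) ∧
    (∀ g : Matrix.SpecialLinearGroup (Fin 2) R,
      ¬ ((∃ b : Matrix.SpecialLinearGroup (Fin 2) R,
        (b : Matrix (Fin 2) (Fin 2) R) 0 1 = 0 ∧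
        ∃ m : Matrix (Fin 2) (Fin 2) k, InUnramifiedTorus R k (↑ε) m ∧
          ((g : Matrix (Fin 2) (Fin 2) R).map (algebraMap R k)) =
            ((b : Matrix (Fin 2) (Fin 2) R).map (algebraMap R k)) * m) ∧
      (∃ b : Matrix.SpecialLinearGroup (Fin 2) R,
        (b : Matrix (Fin 2) (Fin 2) R) 0 1 = 0 ∧
        ∃ m : Matrix (Fin 2) (Fin 2) k, InUnramifiedTorus R k (↑ε) m ∧
          ((g : Matrix (Fin 2) (Fin 2) R).map (algebraMap R k)) =
            ((b : Matrix (Fin 2) (Fin 2) R).map (algebraMap R k)) *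
              ((!![x, y; y, (↑ε⁻¹ : R) * x] : Matrix (Fin 2) (Fin 2) R).map (algebraMap R k)) *
              m))) := by
  have h2 := Ring.two_ne_zero_of_odd_natCard hodd
  have hinj := IsFractionRing.injective R k
  have he : (!![x, y; y, (↑ε⁻¹ : R) * x] : Matrix (Fin 2) (Fin 2) R).det = 1 := by
    rw [det_fin_two_of]
    linear_combination (↑ε⁻¹ : R) * hxy + (y ^ 2 + 1) * ε.mul_inv
  let e : SpecialLinearGroup (Fin 2) R := ⟨_, he⟩
  have hNe : firstRowNorm (ε : R) e = ε := hxy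
  have hN1 : firstRowNorm (ε : R) (1 : SpecialLinearGroup (Fin 2) R) = 1 := firstRowNorm_one _
  refine ⟨he, fun g => ?_, fun g ⟨⟨b₁, hb₁, m₁, hm₁, hg₁⟩, ⟨b₂, hb₂, m₂, hm₂, hg₂⟩⟩ => ?_⟩
  · have hg := isUnit_firstRowNorm hε g.2
    by_cases hsq : IsSquare (residue R (firstRowNorm ε g))
    · obtain ⟨u, hu⟩ := isSquare_of_isSquare_residue h2 hg hsq
      left
      simpa using exists_map_eq_mul_mul_inUnramifiedTorus_of_firstRowNorm_eq (k := k) (u := u)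
        (h := 1) hg (by rw [hN1, hu]; ring)
    · obtain ⟨v, hv⟩ := isSquare_of_isSquare_residue h2 (hg.mul ε.isUnit)
        (by rw [map_mul]; exact FiniteField.isSquare_mul_of_not_isSquare hsq hε)
      right
      refine exists_map_eq_mul_mul_inUnramifiedTorus_of_firstRowNorm_eq (u := v * ↑ε⁻¹) (h := e)
        hg ?_
      rw [hNe]
      linear_combination (↑ε⁻¹ : R) ^ 2 * ↑ε * hv -
        firstRowNorm ε g * (1 + ε * (↑ε⁻¹ : R)) * ε.mul_inv
  · have hN₁ := firstRowNorm_eq_of_map_eq_mul_mul hinj hb₁ hm₁ (h := 1) (by simpa using hg₁)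
    have hN₂ := firstRowNorm_eq_of_map_eq_mul_mul hinj hb₂ hm₂ hg₂
    rw [firstRowNorm_one, mul_one, hN₂, hNe] at hN₁
    exact hε ((isSquare_of_sq_eq_sq_mul
      (SpecialLinearGroup.isUnit_apply_zero_zero_of_apply_zero_one hb₂) hN₁.symm).map _)
end

section
/- Let ε ∈ R^× be a unit whose image in κ is not a square, let T = { [[a, b],[bε, a]] : a, b ∈ k, a² − εb² = 1 } ⊆ SL₂(k), let t ≥ 1 be an integer, and set α = diag(ϖ^{-t}, ϖ^{t}). Then: (i) { g ∈ SL₂(R) : α^{-1} g α ∈ T } = { [[a, b],[bεϖ^{4t}, a]] : a, b ∈ R, a² − εϖ^{4t}b² = 1 }; and (ii) for every integer m ≥ 1, { g ∈ K_m : α^{-1} g α ∈ T } = { [[a, b],[bεϖ^{4t}, a]] : a ∈ 1 + P^{2t+m}, b ∈ P^{m}, a² − εϖ^{4t}b² = 1 }. -/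
/-!
Conjugating by `diag(y, y⁻¹)` multiplies the upper right entry by `y²` and the lower left one
by `y⁻²` and fixes the diagonal. Hence `α⁻¹ g α` has the shape `[[a, b'], [b' ε, a]]` of an
element of `T` exactly when `g = [[a, b], [b ε ϖ^{4t}, a]]` with `b' = b ϖ^{2t}`, and the norm
equation transforms accordingly. For the congruence level, `(a - 1)(a + 1) = ε ϖ^{4t} b²`, where
`a + 1 ≡ 2` is a unit because `q` is odd; so every divisor of `ε ϖ^{4t} b²` divides `a - 1`.
-/

open Matrix IsLocalRing

theorem diagonal_mul_mul_diagonal_inv {k : Type*} [Field k] {y : k} (hy : y ≠ 0)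
    (M : Matrix (Fin 2) (Fin 2) k) :
    diagonal ![y, y⁻¹] * M * diagonal ![y⁻¹, y] =
      !![M 0 0, M 0 1 * y ^ 2; M 1 0 * (y ^ 2)⁻¹, M 1 1] := by
  ext i j
  fin_cases i <;> fin_cases j <;> simp [field]

theorem forall_dvd_sub_one_apply_iff {R : Type*} [CommRing R] {x : R} (a b c d : R) :
    (∀ i j, x ∣ (!![a, b; c, d] - 1) i j) ↔ x ∣ a - 1 ∧ x ∣ b ∧ x ∣ c ∧ x ∣ d - 1 := by
  simp [Fin.forall_fin_two, one_fin_two, and_assoc]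

section Torus

variable {R k : Type*} [CommRing R] [Field k] [Algebra R k] [IsFractionRing R k]

theorem inUnramifiedTorus_diagonal_conj_iff {ε c : R} (hc : c ≠ 0) {y : k}
    (hy : y ^ 2 = algebraMap R k c) (g : Matrix (Fin 2) (Fin 2) R) :
    InUnramifiedTorus R k ε (diagonal ![y, y⁻¹] * g.map (algebraMap R k) * diagonal ![y⁻¹, y]) ↔
      ∃ a b : R, a ^ 2 - ε * c ^ 2 * b ^ 2 = 1 ∧ g = !![a, b; b * ε * c ^ 2, a] := by
  have hinj := IsFractionRing.injective R k
  have hc' : algebraMap R k c ≠ 0 := (map_ne_zero_iff _ hinj).mpr hc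
  have hy0 : y ≠ 0 := ne_zero_pow two_ne_zero (hy ▸ hc')
  rw [diagonal_mul_mul_diagonal_inv hy0, hy, InUnramifiedTorus]
  constructor
  · rintro ⟨_, _, hab, hg⟩
    simp only [map_apply, EmbeddingLike.apply_eq_iff_eq, vecCons_inj, and_true] at hg
    obtain ⟨⟨rfl, rfl⟩, h10, h11⟩ := hg
    refine ⟨g 0 0, g 0 1, hinj ?_, ?_⟩
    · simp only [map_sub, map_mul, map_pow, map_one]
      linear_combination hab
    · have h10 : g 1 0 = g 0 1 * ε * c ^ 2 := hinj (by
        simp only [map_mul, map_pow]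
        field_simp at h10
        linear_combination h10)
      conv_lhs => rw [g.eta_fin_two, h10, hinj h11]
  · rintro ⟨a, b, hab, rfl⟩
    refine ⟨algebraMap R k a, algebraMap R k b * algebraMap R k c, ?_, ?_⟩
    · have := congrArg (algebraMap R k) hab
      simp only [map_sub, map_mul, map_pow, map_one] at this
      linear_combination this
    · ext i j
      fin_cases i <;> fin_cases j <;> simp [field]

theorem inUnramifiedTorus_conj_diagonal_zpow_iff [IsDomain R] {ε ϖ : R} (hϖ : ϖ ≠ 0) (t : ℕ)
    (g : Matrix (Fin 2) (Fin 2) R) :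
    InUnramifiedTorus R k ε
        (diagonal ![(algebraMap R k ϖ) ^ (t : ℤ), (algebraMap R k ϖ) ^ (-(t : ℤ))] *
          g.map (algebraMap R k) *
          diagonal ![(algebraMap R k ϖ) ^ (-(t : ℤ)), (algebraMap R k ϖ) ^ (t : ℤ)]) ↔
      ∃ a b : R, a ^ 2 - ε * ϖ ^ (4 * t) * b ^ 2 = 1 ∧
        g = !![a, b; b * ε * ϖ ^ (4 * t), a] := by
  have h4 : ϖ ^ (4 * t) = (ϖ ^ (2 * t)) ^ 2 := by ring
  simp only [_root_.zpow_neg, zpow_natCast, h4]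
  exact inUnramifiedTorus_diagonal_conj_iff (pow_ne_zero _ hϖ) (by rw [map_pow]; ring) g

end Torus

section LocalRing

variable {R : Type*} [CommRing R] [IsLocalRing R]

theorem isUnit_two_of_odd_natCard_residueField (h : Odd (Nat.card (ResidueField R))) :
    IsUnit (2 : R) := by
  by_contra h2
  have h2' : (2 : ResidueField R) = 0 := by
    rw [← map_ofNat (residue R) 2]
    exact (residue_eq_zero_iff 2).mpr h2
  have hord : addOrderOf (1 : ResidueField R) = 2 :=
    addOrderOf_eq_prime (by rw [two_smul, one_add_one_eq_two, h2']) one_ne_zero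
  exact Nat.not_even_iff_odd.mpr h (even_iff_two_dvd.mpr (hord ▸ addOrderOf_dvd_natCard 1))

theorem isUnit_add_one_of_sub_one_mem (h2 : IsUnit (2 : R)) {a : R}
    (ha : a - 1 ∈ maximalIdeal R) : IsUnit (a + 1) := by
  have h2' : IsUnit ((a + 1) + -(a - 1)) := by rwa [show (a + 1) + -(a - 1) = 2 by ring]
  exact (isUnit_or_isUnit_of_isUnit_add h2').resolve_right (by rwa [IsUnit.neg_iff])

theorem dvd_sub_one_of_dvd_sq_sub_one (h2 : IsUnit (2 : R)) {a x : R}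
    (ha : a - 1 ∈ maximalIdeal R) (hx : x ∣ a ^ 2 - 1) : x ∣ a - 1 :=
  (isUnit_add_one_of_sub_one_mem h2 ha).dvd_mul_right.mp (by convert hx using 1; ring)

theorem pow_add_dvd_sub_one_of_sq_sub_mul_sq_eq_one (h2 : IsUnit (2 : R)) {π a b d : R}
    (hπ : π ∈ maximalIdeal R) {n m : ℕ} (hm : m ≠ 0)
    (hab : a ^ 2 - d * π ^ (2 * n) * b ^ 2 = 1) (ha : π ^ m ∣ a - 1) (hb : π ^ m ∣ b) :
    π ^ (n + m) ∣ a - 1 := by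
  refine dvd_sub_one_of_dvd_sq_sub_one h2 ((maximalIdeal R).mem_of_dvd ?_ hπ) ?_
  · exact (dvd_pow_self π hm).trans ha
  · obtain ⟨c, rfl⟩ := hb
    exact ⟨d * π ^ (n + m) * c ^ 2, by linear_combination hab⟩

end LocalRing

theorem inter_conj_unramified_torus_general
    (R : Type*) [CommRing R] [IsDomain R] [IsDiscreteValuationRing R]
    (hodd : Odd (Nat.card (IsLocalRing.ResidueField R)))
    (k : Type*) [Field k] [Algebra R k] [IsFractionRing R k]
    (ϖ : R) (hϖ : Irreducible ϖ)
    (ε : Rˣ)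
    (t : ℕ) :
    ({g : Matrix.SpecialLinearGroup (Fin 2) R |
        InUnramifiedTorus R k (↑ε)
          (Matrix.diagonal ![(algebraMap R k ϖ) ^ (t : ℤ), (algebraMap R k ϖ) ^ (-(t : ℤ))] *
            ((g : Matrix (Fin 2) (Fin 2) R).map (algebraMap R k)) *
            Matrix.diagonal ![(algebraMap R k ϖ) ^ (-(t : ℤ)), (algebraMap R k ϖ) ^ (t : ℤ)])} =
      {g : Matrix.SpecialLinearGroup (Fin 2) R |
        ∃ a b : R, a ^ 2 - (↑ε : R) * ϖ ^ (4 * t) * b ^ 2 = 1 ∧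
          (g : Matrix (Fin 2) (Fin 2) R) = !![a, b; b * (↑ε : R) * ϖ ^ (4 * t), a]}) ∧
    (∀ m : ℕ, 1 ≤ m →
      ({g : Matrix.SpecialLinearGroup (Fin 2) R |
        (∀ i j, ϖ ^ m ∣ ((g : Matrix (Fin 2) (Fin 2) R) - 1) i j) ∧
        InUnramifiedTorus R k (↑ε)
          (Matrix.diagonal ![(algebraMap R k ϖ) ^ (t : ℤ), (algebraMap R k ϖ) ^ (-(t : ℤ))] *
            ((g : Matrix (Fin 2) (Fin 2) R).map (algebraMap R k)) *
            Matrix.diagonal ![(algebraMap R k ϖ) ^ (-(t : ℤ)), (algebraMap R k ϖ) ^ (t : ℤ)])} =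
      {g : Matrix.SpecialLinearGroup (Fin 2) R |
        ∃ a b : R, a ^ 2 - (↑ε : R) * ϖ ^ (4 * t) * b ^ 2 = 1 ∧
          ϖ ^ (2 * t + m) ∣ (a - 1) ∧ ϖ ^ m ∣ b ∧
          (g : Matrix (Fin 2) (Fin 2) R) = !![a, b; b * (↑ε : R) * ϖ ^ (4 * t), a]})) := by
  have h2 := isUnit_two_of_odd_natCard_residueField hodd
  have hϖmax : ϖ ∈ maximalIdeal R := hϖ.not_isUnit
  refine ⟨Set.ext fun g ↦ inUnramifiedTorus_conj_diagonal_zpow_iff hϖ.ne_zero t g,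
    fun m hm ↦ Set.ext fun g ↦ ?_⟩
  simp only [inUnramifiedTorus_conj_diagonal_zpow_iff hϖ.ne_zero]
  constructor
  · rintro ⟨hKm, a, b, hab, hg⟩
    rw [hg, forall_dvd_sub_one_apply_iff] at hKm
    refine ⟨a, b, hab, ?_, hKm.2.1, hg⟩
    exact pow_add_dvd_sub_one_of_sq_sub_mul_sq_eq_one h2 hϖmax (by omega)
      (by simpa [← mul_assoc] using hab) hKm.1 hKm.2.1
  · rintro ⟨a, b, hab, ha, hb, hg⟩
    have ha' : ϖ ^ m ∣ a - 1 := (pow_dvd_pow ϖ (by omega)).trans ha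
    refine ⟨?_, a, b, hab, hg⟩
    rw [hg, forall_dvd_sub_one_apply_iff]
    exact ⟨ha', hb, (hb.mul_right _).mul_right _, ha'⟩

/-- With `α = diag(ϖ^{-t}, ϖ^{t})` and `T = T_{1,ε}` unramified:
(i) `K ∩ T^α = T_{1, εϖ^{4t}}`, and (ii) for `m ≥ 1`,
`K_m ∩ T^α = { t(a,b) : a ∈ 1 + P^{2t+m}, b ∈ P^m }`. -/
theorem inter_conj_unramified_torus
    (R : Type*) [CommRing R] [IsDomain R] [IsDiscreteValuationRing R]
    [IsAdicComplete (IsLocalRing.maximalIdeal R) R]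
    [Finite (IsLocalRing.ResidueField R)]
    (hodd : Odd (Nat.card (IsLocalRing.ResidueField R)))
    (k : Type*) [Field k] [Algebra R k] [IsFractionRing R k]
    (ϖ : R) (hϖ : Irreducible ϖ)
    (ε : Rˣ) (hε : ¬ IsSquare (IsLocalRing.residue R (↑ε : R)))
    (t : ℕ) (ht : 1 ≤ t) :
    ({g : Matrix.SpecialLinearGroup (Fin 2) R |
        InUnramifiedTorus R k (↑ε)
          (Matrix.diagonal ![(algebraMap R k ϖ) ^ (t : ℤ), (algebraMap R k ϖ) ^ (-(t : ℤ))] *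
            ((g : Matrix (Fin 2) (Fin 2) R).map (algebraMap R k)) *
            Matrix.diagonal ![(algebraMap R k ϖ) ^ (-(t : ℤ)), (algebraMap R k ϖ) ^ (t : ℤ)])} =
      {g : Matrix.SpecialLinearGroup (Fin 2) R |
        ∃ a b : R, a ^ 2 - (↑ε : R) * ϖ ^ (4 * t) * b ^ 2 = 1 ∧
          (g : Matrix (Fin 2) (Fin 2) R) = !![a, b; b * (↑ε : R) * ϖ ^ (4 * t), a]}) ∧
    (∀ m : ℕ, 1 ≤ m →
      ({g : Matrix.SpecialLinearGroup (Fin 2) R |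
        (∀ i j, ϖ ^ m ∣ ((g : Matrix (Fin 2) (Fin 2) R) - 1) i j) ∧
        InUnramifiedTorus R k (↑ε)
          (Matrix.diagonal ![(algebraMap R k ϖ) ^ (t : ℤ), (algebraMap R k ϖ) ^ (-(t : ℤ))] *
            ((g : Matrix (Fin 2) (Fin 2) R).map (algebraMap R k)) *
            Matrix.diagonal ![(algebraMap R k ϖ) ^ (-(t : ℤ)), (algebraMap R k ϖ) ^ (t : ℤ)])} =
      {g : Matrix.SpecialLinearGroup (Fin 2) R |
        ∃ a b : R, a ^ 2 - (↑ε : R) * ϖ ^ (4 * t) * b ^ 2 = 1 ∧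
          ϖ ^ (2 * t + m) ∣ (a - 1) ∧ ϖ ^ m ∣ b ∧
          (g : Matrix (Fin 2) (Fin 2) R) = !![a, b; b * (↑ε : R) * ϖ ^ (4 * t), a]})) :=
  inter_conj_unramified_torus_general R hodd k ϖ hϖ ε t
end

section
/- Let ε ∈ R^× be a unit whose image in κ is not a square, let T = { [[a, b],[bε, a]] : a, b ∈ k, a² − εb² = 1 } ⊆ SL₂(k), let t ≥ 1 and m ≥ 1 be integers, and set α = diag(ϖ^{-t}, ϖ^{t}). Then every g ∈ SL₂(R) with α^{-1} g α ∈ T·K_m factors as g = g₁ g₂ with g₁, g₂ ∈ SL₂(R), α^{-1} g₁ α ∈ T, and α^{-1} g₂ α ∈ K_m; that is, K ∩ (T·K_m)^{α} = (K ∩ T^{α})(K ∩ K_m^{α}), where H^{α} = αHα^{-1}. -/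
/-- Membership of the principal congruence subgroup `K_m ⊆ SL₂(R)`, viewed as a set of
matrices over the fraction field `k`. -/
def InCongruenceSubgroup (R k : Type*) [CommRing R] [Field k] [Algebra R k]
    (ϖ : R) (m : ℕ) (x : Matrix (Fin 2) (Fin 2) k) : Prop :=
  ∃ h : Matrix.SpecialLinearGroup (Fin 2) R,
    (∀ i j, ϖ ^ m ∣ ((h : Matrix (Fin 2) (Fin 2) R) - 1) i j) ∧
    x = (h : Matrix (Fin 2) (Fin 2) R).map (algebraMap R k)

open IsLocalRing

theorem isUnit_two_of_odd_natCard {F : Type*} [CommRing F] (h : Odd (Nat.card F)) :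
    IsUnit (2 : F) := by
  have : Finite F := Nat.finite_of_card_ne_zero h.pos.ne'
  have : Fintype F := Fintype.ofFinite F
  have : Fact (Nat.Prime 2) := ⟨Nat.prime_two⟩
  rw [← Nat.cast_ofNat, isUnit_iff_not_dvd_char, prime_dvd_char_iff_dvd_card,
    ← Nat.card_eq_fintype_card]
  exact h.not_two_dvd_nat

theorem eq_zero_and_eq_zero_of_sq_sub_mul_sq_eq_zero {F : Type*} [Field F] {e x y : F}
    (he : ¬IsSquare e) (h : x ^ 2 - e * y ^ 2 = 0) : x = 0 ∧ y = 0 := by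
  obtain rfl : y = 0 := by
    by_contra hy
    exact he ⟨x / y, by field_simp; linear_combination -h⟩
  simpa using h

theorem Prime.pow_dvd_sub_one_or_pow_dvd_add_one {R : Type*} [CommRing R] [IsDomain R] {p a : R}
    (hp : Prime p) (h2 : IsUnit (2 : R)) {m : ℕ} (h : p ^ m ∣ a ^ 2 - 1) :
    p ^ m ∣ a - 1 ∨ p ^ m ∣ a + 1 := by
  rw [show a ^ 2 - 1 = (a - 1) * (a + 1) by ring] at h
  by_cases hp1 : p ∣ a + 1
  · have hp2 : ¬p ∣ a - 1 := fun hp2 ↦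
      hp.not_isUnit (isUnit_of_dvd_unit (by simpa [one_add_one_eq_two] using dvd_sub hp1 hp2) h2)
    exact Or.inr (hp.pow_dvd_of_dvd_mul_left m hp2 h)
  · exact Or.inl (hp.pow_dvd_of_dvd_mul_right m hp1 h)

theorem Prime.pow_min_dvd_of_pow_dvd_mul_add_mul {R : Type*} [CommRing R] [IsDomain R]
    {p a b x y : R} (hp : Prime p) {n m : ℕ} (h : p ^ n ∣ a * x + b * y) (hx : p ^ m ∣ x)
    (hy : p ^ m ∣ y - 1) : p ^ min n m ∣ b := by
  rcases Nat.eq_zero_or_pos m with rfl | hm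
  · simp
  have hpy : ¬p ∣ y := fun hpy ↦ hp.not_isUnit <| isUnit_of_dvd_one <| by
    simpa using dvd_sub hpy ((dvd_pow_self p hm.ne').trans hy)
  refine hp.pow_dvd_of_dvd_mul_right _ hpy ?_
  simpa using dvd_sub ((pow_dvd_pow p (min_le_left n m)).trans h)
    (((pow_dvd_pow p (min_le_right n m)).trans hx).mul_left a)

namespace IsDiscreteValuationRing

variable {R : Type*} [CommRing R] [IsDomain R] [IsDiscreteValuationRing R] {ε : R}

theorem dvd_and_dvd_of_dvd_sq_sub_mul_sq (hε : ¬IsSquare (residue R ε)) {p A B : R}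
    (hp : Irreducible p) (h : p ∣ A ^ 2 - ε * B ^ 2) : p ∣ A ∧ p ∣ B := by
  simp only [← Ideal.mem_span_singleton, ← hp.maximalIdeal_eq, ← residue_eq_zero_iff] at h ⊢
  exact eq_zero_and_eq_zero_of_sq_sub_mul_sq_eq_zero hε (by simpa using h)

theorem dvd_and_dvd_of_sq_sub_mul_sq_eq_sq (hε : ¬IsSquare (residue R ε)) {c : R}
    (hc : c ≠ 0) {A B : R} (h : A ^ 2 - ε * B ^ 2 = c ^ 2) : c ∣ A ∧ c ∣ B := by
  induction c using UniqueFactorizationMonoid.induction_on_prime generalizing A B with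
  | h₁ => exact absurd rfl hc
  | h₂ u hu => exact ⟨hu.dvd, hu.dvd⟩
  | h₃ c p hc0 hp ih =>
    obtain ⟨⟨A, rfl⟩, ⟨B, rfl⟩⟩ :=
      dvd_and_dvd_of_dvd_sq_sub_mul_sq hε hp.irreducible (by rw [h]; exact ⟨p * c ^ 2, by ring⟩)
    have hAB : A ^ 2 - ε * B ^ 2 = c ^ 2 :=
      mul_left_cancel₀ (pow_ne_zero 2 hp.ne_zero) (by linear_combination h)
    obtain ⟨hA, hB⟩ := ih hc0 hAB
    exact ⟨mul_dvd_mul_left p hA, mul_dvd_mul_left p hB⟩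

theorem exists_algebraMap_eq_of_sq_sub_mul_sq_eq_one (k : Type*) [Field k] [Algebra R k]
    [IsFractionRing R k] (hε : ¬IsSquare (residue R ε)) {a b : k}
    (h : a ^ 2 - algebraMap R k ε * b ^ 2 = 1) :
    ∃ a₀ b₀ : R, algebraMap R k a₀ = a ∧ algebraMap R k b₀ = b ∧ a₀ ^ 2 - ε * b₀ ^ 2 = 1 := by
  obtain ⟨⟨c, hc⟩, hcab⟩ :=
    IsLocalization.exist_integer_multiples_of_finite (nonZeroDivisors R) ![a, b]
  obtain ⟨A, hA⟩ := hcab 0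
  obtain ⟨B, hB⟩ := hcab 1
  simp only [Matrix.cons_val_zero, Matrix.cons_val_one, Algebra.smul_def] at hA hB
  have hc0 : c ≠ 0 := nonZeroDivisors.ne_zero hc
  have hφc : algebraMap R k c ≠ 0 := by simpa using hc0
  obtain ⟨⟨a₀, rfl⟩, ⟨b₀, rfl⟩⟩ := dvd_and_dvd_of_sq_sub_mul_sq_eq_sq hε hc0 (A := A) (B := B)
    (FaithfulSMul.algebraMap_injective R k (by
      simp only [map_sub, map_mul, map_pow, hA, hB]
      linear_combination algebraMap R k c ^ 2 * h))
  have ha : algebraMap R k a₀ = a :=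
    mul_left_cancel₀ hφc (by rw [← map_mul, hA])
  have hb : algebraMap R k b₀ = b :=
    mul_left_cancel₀ hφc (by rw [← map_mul, hB])
  refine ⟨a₀, b₀, ha, hb, FaithfulSMul.algebraMap_injective R k ?_⟩
  simpa [ha, hb] using h

end IsDiscreteValuationRing

theorem exists_sq_sub_mul_sq_eq_one_pow_dvd_of_pow_min_dvd {R : Type*} [CommRing R] [IsDomain R]
    {p a b ε : R}
    (hp : Prime p) (h2 : IsUnit (2 : R)) (hab : a ^ 2 - ε * b ^ 2 = 1) {n m : ℕ}
    (hb : p ^ min n m ∣ b) :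
    ∃ a' b' : R, a' ^ 2 - ε * b' ^ 2 = 1 ∧ p ^ n ∣ b' ∧ p ^ m ∣ a' - a ∧ p ^ m ∣ b' - b := by
  rcases le_or_gt m n with hmn | hnm
  · rw [min_eq_right hmn] at hb
    have hsq : p ^ m ∣ a ^ 2 - 1 := by
      rw [show a ^ 2 - 1 = ε * b * b by linear_combination hab]
      exact hb.mul_left _
    rcases hp.pow_dvd_sub_one_or_pow_dvd_add_one h2 hsq with ha | ha
    · exact ⟨1, 0, by ring, dvd_zero _, dvd_sub_comm.1 ha, by simpa using hb⟩
    · refine ⟨-1, 0, by ring, dvd_zero _, ?_, by simpa using hb⟩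
      rwa [show (-1 : R) - a = -(a + 1) by ring, dvd_neg]
  · rw [min_eq_left hnm.le] at hb
    exact ⟨a, b, hab, hb, by simp, by simp⟩

namespace Matrix.SpecialLinearGroup

section Congruence

variable {n R : Type*} [Fintype n] [DecidableEq n] [CommRing R] (I : Ideal R)

def principalCongruenceSubgroup : Subgroup (SpecialLinearGroup n R) :=
  (map (Ideal.Quotient.mk I)).ker

theorem map_quotient_mk_eq_map_iff {A B : SpecialLinearGroup n R} :
    map (Ideal.Quotient.mk I) A = map (Ideal.Quotient.mk I) B ↔ ∀ i j, A i j - B i j ∈ I := by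
  simp [SpecialLinearGroup.ext_iff, Ideal.Quotient.eq]

theorem mem_principalCongruenceSubgroup_iff {A : SpecialLinearGroup n R} :
    A ∈ principalCongruenceSubgroup I ↔ ∀ i j, (A - 1 : Matrix n n R) i j ∈ I := by
  rw [principalCongruenceSubgroup, MonoidHom.mem_ker, ← map_one (map (Ideal.Quotient.mk I)),
    map_quotient_mk_eq_map_iff]
  simp

theorem inv_mul_mem_principalCongruenceSubgroup_iff {A B : SpecialLinearGroup n R} :
    A⁻¹ * B ∈ principalCongruenceSubgroup I ↔ ∀ i j, A i j - B i j ∈ I := by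
  rw [principalCongruenceSubgroup, MonoidHom.mem_ker, map_mul, map_inv, inv_mul_eq_one,
    map_quotient_mk_eq_map_iff]

theorem mem_principalCongruenceSubgroup_span_singleton_iff {r : R} {A : SpecialLinearGroup n R} :
    A ∈ principalCongruenceSubgroup (Ideal.span {r}) ↔ ∀ i j, r ∣ (A - 1 : Matrix n n R) i j := by
  simp [mem_principalCongruenceSubgroup_iff, Ideal.mem_span_singleton]

end Congruence

section Torus

variable {R k : Type*} [CommRing R] [Field k] [Algebra R k]

def torusElement (ε a b : R) (h : a ^ 2 - ε * b ^ 2 = 1) : SpecialLinearGroup (Fin 2) R :=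
  ⟨!![a, b; b * ε, a], by rw [det_fin_two_of]; linear_combination h⟩

@[simp]
theorem coe_torusElement (ε a b : R) (h : a ^ 2 - ε * b ^ 2 = 1) :
    ↑(torusElement ε a b h) = !![a, b; b * ε, a] :=
  rfl

theorem coe_map_torusElement {ε a b : R} (h : a ^ 2 - ε * b ^ 2 = 1) :
    ↑(map (algebraMap R k) (torusElement ε a b h)) =
      !![algebraMap R k a, algebraMap R k b;
        algebraMap R k b * algebraMap R k ε, algebraMap R k a] := by
  ext i j; fin_cases i <;> fin_cases j <;> simp

theorem inUnramifiedTorus_map_torusElement {ε a b : R} (h : a ^ 2 - ε * b ^ 2 = 1) :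
    InUnramifiedTorus R k ε (map (algebraMap R k) (torusElement ε a b h)) :=
  ⟨algebraMap R k a, algebraMap R k b, by simpa using congrArg (algebraMap R k) h,
    coe_map_torusElement h⟩

end Torus

section DiagonalConj

variable {R k : Type*} [CommRing R] [Field k]

def diagonalUnit (z : kˣ) : SpecialLinearGroup (Fin 2) k :=
  ⟨diagonal ![(z : k), ↑z⁻¹], by simp⟩

theorem coe_diagonalUnit_conj (z : kˣ) (M : SpecialLinearGroup (Fin 2) k) :
    ↑(diagonalUnit z * M * (diagonalUnit z)⁻¹) =
      diagonal ![(z : k), ↑z⁻¹] * (M : Matrix (Fin 2) (Fin 2) k) * diagonal ![↑z⁻¹, (z : k)] := by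
  rw [coe_mul, coe_mul, coe_inv, diagonalUnit, coe_mk, adjugate_fin_two]
  congr 1
  ext i j; fin_cases i <;> fin_cases j <;> simp

theorem diagonal_zpow_mul_map_mul_diagonal_zpow (f : R →+* k) {π : k} (hπ : π ≠ 0) (n : ℤ)
    (g : SpecialLinearGroup (Fin 2) R) :
    diagonal ![π ^ n, π ^ (-n)] * (g : Matrix (Fin 2) (Fin 2) R).map f *
        diagonal ![π ^ (-n), π ^ n] =
      ↑(diagonalUnit (Units.mk0 π hπ ^ n) * map f g * (diagonalUnit (Units.mk0 π hπ ^ n))⁻¹) := by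
  rw [coe_diagonalUnit_conj]
  simp [_root_.zpow_neg]

theorem coe_diagonalUnit_conj_eq_fin_two (z : kˣ) (M : SpecialLinearGroup (Fin 2) k) :
    ↑(diagonalUnit z * M * (diagonalUnit z)⁻¹) =
      !![M 0 0, z * z * M 0 1; (z : k)⁻¹ * (z : k)⁻¹ * M 1 0, M 1 1] := by
  rw [coe_diagonalUnit_conj]
  ext i j; fin_cases i <;> fin_cases j <;> simp [mul_apply, Fin.sum_univ_two] <;> field_simp

theorem sq_dvd_apply_zero_one_of_diagonalUnit_conj_eq [Algebra R k] [FaithfulSMul R k]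
    {z : kˣ} {w : R} (hzw : (z : k) = algebraMap R k w) {g y : SpecialLinearGroup (Fin 2) R}
    (h : diagonalUnit z * map (algebraMap R k) g * (diagonalUnit z)⁻¹ = map (algebraMap R k) y) :
    w ^ 2 ∣ y 0 1 := by
  have h01 := congrArg (fun M : SpecialLinearGroup (Fin 2) k ↦ M 0 1) h
  simp only [coe_diagonalUnit_conj_eq_fin_two, hzw] at h01
  refine ⟨g 0 1, FaithfulSMul.algebraMap_injective R k ?_⟩
  simp [map_apply_coe, RingHom.mapMatrix_apply, Matrix.map_apply] at h01
  simp [← h01, sq]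

theorem exists_diagonalUnit_conj_eq_of_sq_dvd [Algebra R k] {z : kˣ} {w : R}
    (hzw : (z : k) = algebraMap R k w) {s : SpecialLinearGroup (Fin 2) R} (hs : w ^ 2 ∣ s 0 1) :
    ∃ g : SpecialLinearGroup (Fin 2) R,
      diagonalUnit z * map (algebraMap R k) g * (diagonalUnit z)⁻¹ = map (algebraMap R k) s := by
  obtain ⟨c, hc⟩ := hs
  have hdet : (!![s 0 0, c; w ^ 2 * s 1 0, s 1 1]).det = 1 := by
    have h1 := s.det_coe
    rw [det_fin_two] at h1
    rw [det_fin_two_of]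
    linear_combination h1 + s 1 0 * hc
  obtain ⟨g, hg⟩ : ∃ g : SpecialLinearGroup (Fin 2) R,
      (g : Matrix (Fin 2) (Fin 2) R) = !![s 0 0, c; w ^ 2 * s 1 0, s 1 1] := ⟨⟨_, hdet⟩, rfl⟩
  refine ⟨g, Subtype.ext ?_⟩
  rw [coe_diagonalUnit_conj_eq_fin_two]
  ext i j; fin_cases i <;> fin_cases j <;> simp [map_apply_coe, hg, hc, ← hzw, sq]
  field_simp

end DiagonalConj

theorem exists_diagonalUnit_conj_eq_torusElement_congr {R k : Type*} [CommRing R] [IsDomain R]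
    [Field k] [Algebra R k] [FaithfulSMul R k] {ϖ ε : R} (hϖ : Prime ϖ) (h2 : IsUnit (2 : R))
    {z : kˣ} {t m : ℕ} (hz : (z : k) = algebraMap R k (ϖ ^ t)) {a₀ b₀ : R}
    (hab₀ : a₀ ^ 2 - ε * b₀ ^ 2 = 1) {g h : SpecialLinearGroup (Fin 2) R}
    (hh : h ∈ principalCongruenceSubgroup (Ideal.span {ϖ ^ m}))
    (hg : diagonalUnit z * map (algebraMap R k) g * (diagonalUnit z)⁻¹ =
      map (algebraMap R k) (torusElement ε a₀ b₀ hab₀ * h)) :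
    ∃ (a₁ b₁ : R) (hab₁ : a₁ ^ 2 - ε * b₁ ^ 2 = 1) (g₁ : SpecialLinearGroup (Fin 2) R),
      diagonalUnit z * map (algebraMap R k) g₁ * (diagonalUnit z)⁻¹ =
        map (algebraMap R k) (torusElement ε a₁ b₁ hab₁) ∧
      (torusElement ε a₁ b₁ hab₁)⁻¹ * torusElement ε a₀ b₀ hab₀ ∈
        principalCongruenceSubgroup (Ideal.span {ϖ ^ m}) := by
  rw [mem_principalCongruenceSubgroup_span_singleton_iff] at hh
  have hb₀ : ϖ ^ min (2 * t) m ∣ b₀ := by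
    have h01 := sq_dvd_apply_zero_one_of_diagonalUnit_conj_eq hz hg
    simp only [← pow_mul, coe_mul, mul_apply, Fin.sum_univ_two, coe_torusElement] at h01
    exact hϖ.pow_min_dvd_of_pow_dvd_mul_add_mul (by simpa [mul_comm] using h01)
      (by simpa using hh 0 1) (by simpa using hh 1 1)
  obtain ⟨a₁, b₁, hab₁, hb₁, ha, hb⟩ :=
    exists_sq_sub_mul_sq_eq_one_pow_dvd_of_pow_min_dvd hϖ h2 hab₀ hb₀
  obtain ⟨g₁, hg₁⟩ := exists_diagonalUnit_conj_eq_of_sq_dvd hz (s := torusElement ε a₁ b₁ hab₁)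
    (by simpa [← pow_mul, mul_comm] using hb₁)
  refine ⟨a₁, b₁, hab₁, g₁, hg₁, (inv_mul_mem_principalCongruenceSubgroup_iff _).2 fun i j ↦ ?_⟩
  fin_cases i <;> fin_cases j <;> simp [Ideal.mem_span_singleton, ha, hb, ← sub_mul, hb.mul_right ε]

end Matrix.SpecialLinearGroup

open Matrix.SpecialLinearGroup IsDiscreteValuationRing in
theorem inter_conj_torus_congruence_factors_general
    (R : Type*) [CommRing R] [IsDomain R] [IsDiscreteValuationRing R]
    (hodd : Odd (Nat.card (IsLocalRing.ResidueField R)))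
    (k : Type*) [Field k] [Algebra R k] [IsFractionRing R k]
    (ϖ : R) (hϖ : Irreducible ϖ)
    (ε : Rˣ) (hε : ¬ IsSquare (IsLocalRing.residue R (↑ε : R)))
    (t m : ℕ)
    (g : Matrix.SpecialLinearGroup (Fin 2) R)
    (hg : ∃ tm x : Matrix (Fin 2) (Fin 2) k,
      InUnramifiedTorus R k (↑ε) tm ∧ InCongruenceSubgroup R k ϖ m x ∧
      Matrix.diagonal ![(algebraMap R k ϖ) ^ (t : ℤ), (algebraMap R k ϖ) ^ (-(t : ℤ))] *
          ((g : Matrix (Fin 2) (Fin 2) R).map (algebraMap R k)) *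
          Matrix.diagonal ![(algebraMap R k ϖ) ^ (-(t : ℤ)), (algebraMap R k ϖ) ^ (t : ℤ)] =
        tm * x) :
    ∃ g₁ g₂ : Matrix.SpecialLinearGroup (Fin 2) R,
      g = g₁ * g₂ ∧
      InUnramifiedTorus R k (↑ε)
        (Matrix.diagonal ![(algebraMap R k ϖ) ^ (t : ℤ), (algebraMap R k ϖ) ^ (-(t : ℤ))] *
          ((g₁ : Matrix (Fin 2) (Fin 2) R).map (algebraMap R k)) *
          Matrix.diagonal ![(algebraMap R k ϖ) ^ (-(t : ℤ)), (algebraMap R k ϖ) ^ (t : ℤ)]) ∧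
      InCongruenceSubgroup R k ϖ m
        (Matrix.diagonal ![(algebraMap R k ϖ) ^ (t : ℤ), (algebraMap R k ϖ) ^ (-(t : ℤ))] *
          ((g₂ : Matrix (Fin 2) (Fin 2) R).map (algebraMap R k)) *
          Matrix.diagonal ![(algebraMap R k ϖ) ^ (-(t : ℤ)), (algebraMap R k ϖ) ^ (t : ℤ)]) := by
  set φ := algebraMap R k
  have hπ : φ ϖ ≠ 0 := by simpa [φ] using hϖ.ne_zero
  set D := diagonalUnit (Units.mk0 (φ ϖ) hπ ^ (t : ℤ))
  simp only [diagonal_zpow_mul_map_mul_diagonal_zpow φ hπ] at hg ⊢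
  obtain ⟨_, _, ⟨a, b, hab, rfl⟩, ⟨h, hh, rfl⟩, hgx⟩ := hg
  obtain ⟨a₀, b₀, rfl, rfl, hab₀⟩ := exists_algebraMap_eq_of_sq_sub_mul_sq_eq_one k hε hab
  have hgT : D * map φ g * D⁻¹ = map φ (torusElement (ε : R) a₀ b₀ hab₀ * h) := by
    ext1
    rw [hgx, map_mul, coe_mul, coe_map_torusElement]
    rfl
  have h2 : IsUnit (2 : R) := (isUnit_map_iff (residue R) 2).1 <| by
    rw [map_ofNat]; exact isUnit_two_of_odd_natCard hodd
  have hhK := (mem_principalCongruenceSubgroup_span_singleton_iff (r := ϖ ^ m)).2 hh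
  obtain ⟨a₁, b₁, hab₁, g₁, hg₁, hs⟩ :=
    exists_diagonalUnit_conj_eq_torusElement_congr hϖ.prime h2 (t := t) (by simp [φ]) hab₀ hhK hgT
  refine ⟨g₁, g₁⁻¹ * g, (mul_inv_cancel_left g₁ g).symm,
    hg₁ ▸ inUnramifiedTorus_map_torusElement hab₁, _,
    (mem_principalCongruenceSubgroup_span_singleton_iff).1 (mul_mem hs hhK), ?_⟩
  have hconj_mul : D * map φ (g₁⁻¹ * g) * D⁻¹ = (D * map φ g₁ * D⁻¹)⁻¹ * (D * map φ g * D⁻¹) := by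
    simp only [map_mul, map_inv]
    group
  rw [hconj_mul, hg₁, hgT, ← map_inv, ← map_mul, ← mul_assoc]
  rfl

/-- With `α = diag(ϖ^{-t}, ϖ^{t})` and `T = T_{1,ε}` unramified:
`K ∩ (T·K_m)^α = (K ∩ T^α)(K ∩ K_m^α)`. -/
theorem inter_conj_torus_congruence_factors
    (R : Type*) [CommRing R] [IsDomain R] [IsDiscreteValuationRing R]
    [IsAdicComplete (IsLocalRing.maximalIdeal R) R]
    [Finite (IsLocalRing.ResidueField R)]
    (hodd : Odd (Nat.card (IsLocalRing.ResidueField R)))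
    (k : Type*) [Field k] [Algebra R k] [IsFractionRing R k]
    (ϖ : R) (hϖ : Irreducible ϖ)
    (ε : Rˣ) (hε : ¬ IsSquare (IsLocalRing.residue R (↑ε : R)))
    (t m : ℕ) (ht : 1 ≤ t) (hm : 1 ≤ m)
    (g : Matrix.SpecialLinearGroup (Fin 2) R)
    (hg : ∃ tm x : Matrix (Fin 2) (Fin 2) k,
      InUnramifiedTorus R k (↑ε) tm ∧ InCongruenceSubgroup R k ϖ m x ∧
      Matrix.diagonal ![(algebraMap R k ϖ) ^ (t : ℤ), (algebraMap R k ϖ) ^ (-(t : ℤ))] *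
          ((g : Matrix (Fin 2) (Fin 2) R).map (algebraMap R k)) *
          Matrix.diagonal ![(algebraMap R k ϖ) ^ (-(t : ℤ)), (algebraMap R k ϖ) ^ (t : ℤ)] =
        tm * x) :
    ∃ g₁ g₂ : Matrix.SpecialLinearGroup (Fin 2) R,
      g = g₁ * g₂ ∧
      InUnramifiedTorus R k (↑ε)
        (Matrix.diagonal ![(algebraMap R k ϖ) ^ (t : ℤ), (algebraMap R k ϖ) ^ (-(t : ℤ))] *
          ((g₁ : Matrix (Fin 2) (Fin 2) R).map (algebraMap R k)) *
          Matrix.diagonal ![(algebraMap R k ϖ) ^ (-(t : ℤ)), (algebraMap R k ϖ) ^ (t : ℤ)]) ∧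
      InCongruenceSubgroup R k ϖ m
        (Matrix.diagonal ![(algebraMap R k ϖ) ^ (t : ℤ), (algebraMap R k ϖ) ^ (-(t : ℤ))] *
          ((g₂ : Matrix (Fin 2) (Fin 2) R).map (algebraMap R k)) *
          Matrix.diagonal ![(algebraMap R k ϖ) ^ (-(t : ℤ)), (algebraMap R k ϖ) ^ (t : ℤ)]) :=
  inter_conj_torus_congruence_factors_general R hodd k ϖ hϖ ε hε t m g hg
end

section
/- Let ε ∈ R^× be a unit whose image in κ is not a square, let T = { [[a, b],[bε, a]] : a, b ∈ k, a² − εb² = 1 } ⊆ SL₂(k), let t ≥ 1 and m ≥ 1 be integers with 2t ≥ m, and set α = diag(ϖ^{-t}, ϖ^{t}). Then { g ∈ SL₂(R) : α^{-1} g α ∈ T·K_m } = { z·h : z ∈ {I, −I}, h ∈ SL₂(R), α^{-1} h α ∈ K_m }; that is, K ∩ (T·K_m)^{α} = Z·(K ∩ K_m^{α}) where Z = {±I} and H^{α} = αHα^{-1}. -/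
open Matrix

namespace IsLocalRing

variable {R : Type*} [CommRing R] [IsLocalRing R]

lemma isUnit_two_of_odd_card_residueField (hodd : Odd (Nat.card (ResidueField R))) :
    IsUnit (2 : R) := by
  have : Fintype (ResidueField R) :=
    @Fintype.ofFinite _ (Nat.finite_of_card_ne_zero hodd.pos.ne')
  rw [← residue_ne_zero_iff_isUnit, map_ofNat]
  intro h2
  have : CharP (ResidueField R) 2 := CharTwo.of_one_ne_zero_of_two_eq_zero one_ne_zero h2
  have heven := FiniteField.even_card_of_char_two (ringChar.eq (ResidueField R) 2)
  rw [Nat.card_eq_fintype_card, Nat.odd_iff] at hodd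
  omega

lemma exists_sign_dvd_sub_of_dvd_sq_sub_one (h2 : IsUnit (2 : R)) {d a : R}
    (h : d ∣ a ^ 2 - 1) : ∃ s : R, (s = 1 ∨ s = -1) ∧ d ∣ a - s := by
  have hfactor : a ^ 2 - 1 = (a - 1) * (a + 1) := by ring
  -- `(a + 1) - (a - 1) = 2` is a unit, so `a + 1` and `a - 1` are not both in the maximal ideal.
  have hunit : IsUnit (a + 1) ∨ IsUnit (a - 1) := by
    rw [← IsUnit.neg_iff (a - 1)]
    exact isUnit_or_isUnit_of_isUnit_add (by convert h2 using 1; ring)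
  rcases hunit with hu | hu
  · exact ⟨1, .inl rfl, hu.dvd_mul_right.mp (hfactor ▸ h)⟩
  · exact ⟨-1, .inr rfl, by rw [sub_neg_eq_add]; exact hu.dvd_mul_left.mp (hfactor ▸ h)⟩

end IsLocalRing

lemma Matrix.dvd_mul_sub_one {R n : Type*} [CommRing R] [Fintype n] [DecidableEq n] {d : R}
    {A B : Matrix n n R} (hA : ∀ i j, d ∣ (A - 1) i j) (hB : ∀ i j, d ∣ (B - 1) i j) (i j : n) :
    d ∣ (A * B - 1) i j := by
  rw [show A * B - 1 = (A - 1) * (B - 1) + (A - 1) + (B - 1) by noncomm_ring]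
  exact dvd_add (dvd_add (Finset.dvd_sum fun l _ ↦ (hA i l).mul_right _) (hA i j)) (hB i j)

lemma exists_sign_smul_torus_sub_one_dvd {R : Type*} [CommRing R] [IsLocalRing R]
    (h2 : IsUnit (2 : R)) {d ε a b : R} (hab : a ^ 2 - ε * b ^ 2 = 1) (hb : d ∣ b) :
    ∃ s : R, (s = 1 ∨ s = -1) ∧ ∀ i j, d ∣ (s • !![a, b; b * ε, a] - 1) i j := by
  have hsq : d ∣ a ^ 2 - 1 := by
    rw [show a ^ 2 - 1 = ε * b ^ 2 by linear_combination hab]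
    exact (dvd_pow hb two_ne_zero).mul_left ε
  obtain ⟨s, hs, has⟩ := IsLocalRing.exists_sign_dvd_sub_of_dvd_sq_sub_one h2 hsq
  have hdiag : d ∣ s * a - 1 := by
    rw [show s * a - 1 = s * (a - s) by rcases hs with rfl | rfl <;> ring]
    exact has.mul_left s
  refine ⟨s, hs, fun i j ↦ ?_⟩
  fin_cases i <;> fin_cases j <;> simp [hdiag, hb, Dvd.dvd.mul_left, Dvd.dvd.mul_right]

section DiagConj

variable {k : Type*} [Field k]

/-- `diagConj π t M = α⁻¹ M α` for `α = diag(π^{-t}, π^t)`. -/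
def diagConj (π : k) (t : ℕ) (M : Matrix (Fin 2) (Fin 2) k) : Matrix (Fin 2) (Fin 2) k :=
  diagonal ![π ^ (t : ℤ), π ^ (-(t : ℤ))] * M * diagonal ![π ^ (-(t : ℤ)), π ^ (t : ℤ)]

lemma diagConj_eq {π : k} (hπ : π ≠ 0) (t : ℕ) (M : Matrix (Fin 2) (Fin 2) k) :
    diagConj π t M = !![M 0 0, π ^ (2 * t) * M 0 1; (π ^ (2 * t))⁻¹ * M 1 0, M 1 1] := by
  ext i j
  fin_cases i <;> fin_cases j <;> simp [diagConj, two_mul, pow_add] <;> field_simp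

lemma diagConj_smul (π : k) (t : ℕ) (c : k) (M : Matrix (Fin 2) (Fin 2) k) :
    diagConj π t (c • M) = c • diagConj π t M := by
  simp [diagConj]

/-- `T = diagConj G * adjugate H`, and the top row of `diagConj G` is `(G 0 0, ϖ^{2t} G 0 1)`. -/
lemma algebraMap_topRow_eq_of_diagConj_eq_mul {R : Type*} [CommRing R] [Algebra R k] {ϖ : R}
    (hϖ : algebraMap R k ϖ ≠ 0) {t : ℕ} {G H : Matrix (Fin 2) (Fin 2) R} (hH : H.det = 1)
    {T : Matrix (Fin 2) (Fin 2) k}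
    (h : diagConj (algebraMap R k ϖ) t (G.map (algebraMap R k)) = T * H.map (algebraMap R k)) :
    algebraMap R k (G 0 0 * H 1 1 - ϖ ^ (2 * t) * (G 0 1 * H 1 0)) = T 0 0 ∧
      algebraMap R k (ϖ ^ (2 * t) * (G 0 1 * H 0 0) - G 0 0 * H 0 1) = T 0 1 := by
  rw [diagConj_eq hϖ] at h
  have e00 := congrFun (congrFun h 0) 0
  have e01 := congrFun (congrFun h 0) 1
  have hdet := congrArg (algebraMap R k) hH
  simp only [map_apply, of_apply, cons_val', cons_val_zero, cons_val_one, cons_val_fin_one,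
    mul_apply, Fin.sum_univ_two, det_fin_two, map_sub, map_mul, map_one] at e00 e01 hdet
  refine ⟨?_, ?_⟩ <;> simp only [map_sub, map_mul, map_pow]
  · linear_combination e00 * algebraMap R k (H 1 1) - e01 * algebraMap R k (H 1 0) + T 0 0 * hdet
  · linear_combination e01 * algebraMap R k (H 0 0) - e00 * algebraMap R k (H 0 1) + T 0 1 * hdet

end DiagConj

section TorusCongruence

variable {R k : Type*} [CommRing R] [Field k] [Algebra R k]

lemma Matrix.SpecialLinearGroup.exists_coe_eq_smul_one {s : R} (hs : s = 1 ∨ s = -1) :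
    ∃ z : SpecialLinearGroup (Fin 2) R,
      ((z : Matrix (Fin 2) (Fin 2) R) = 1 ∨ (z : Matrix (Fin 2) (Fin 2) R) = -1) ∧
        (z : Matrix (Fin 2) (Fin 2) R) = s • 1 := by
  rcases hs with rfl | rfl
  · exact ⟨1, by simp⟩
  · exact ⟨-1, by simp⟩

lemma exists_integral_torus_coeffs_of_diagConj_eq_torus_mul
    (hinj : Function.Injective (algebraMap R k)) {ϖ ε : R} (hϖ : ϖ ≠ 0) {t m : ℕ}
    (htm : m ≤ 2 * t) {g h : SpecialLinearGroup (Fin 2) R}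
    (hh : ∀ i j, ϖ ^ m ∣ ((h : Matrix (Fin 2) (Fin 2) R) - 1) i j) {a b : k}
    (heq : diagConj (algebraMap R k ϖ) t ((g : Matrix (Fin 2) (Fin 2) R).map (algebraMap R k)) =
      !![a, b; b * algebraMap R k ε, a] * (h : Matrix (Fin 2) (Fin 2) R).map (algebraMap R k)) :
    ∃ a' b' : R, algebraMap R k a' = a ∧ algebraMap R k b' = b ∧ ϖ ^ m ∣ b' := by
  obtain ⟨ha, hb⟩ :=
    algebraMap_topRow_eq_of_diagConj_eq_mul ((map_ne_zero_iff _ hinj).mpr hϖ) h.prop heq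
  refine ⟨_, _, ha, hb, dvd_sub ((pow_dvd_pow ϖ htm).mul_right _) (Dvd.dvd.mul_left ?_ _)⟩
  simpa using hh 0 1

lemma exists_center_mul_of_diagConj_eq_torus_mul [IsLocalRing R] (h2 : IsUnit (2 : R))
    (hinj : Function.Injective (algebraMap R k)) {ϖ ε : R} (hϖ : ϖ ≠ 0) {t m : ℕ}
    (htm : m ≤ 2 * t) {g : SpecialLinearGroup (Fin 2) R} {tm x : Matrix (Fin 2) (Fin 2) k}
    (htorus : InUnramifiedTorus R k ε tm) (hx : InCongruenceSubgroup R k ϖ m x)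
    (heq : diagConj (algebraMap R k ϖ) t ((g : Matrix (Fin 2) (Fin 2) R).map (algebraMap R k)) =
      tm * x) :
    ∃ z h : SpecialLinearGroup (Fin 2) R,
      ((z : Matrix (Fin 2) (Fin 2) R) = 1 ∨ (z : Matrix (Fin 2) (Fin 2) R) = -1) ∧
      InCongruenceSubgroup R k ϖ m
        (diagConj (algebraMap R k ϖ) t ((h : Matrix (Fin 2) (Fin 2) R).map (algebraMap R k))) ∧
      g = z * h := by
  obtain ⟨a, b, habk, rfl⟩ := htorus
  obtain ⟨h, hh, rfl⟩ := hx
  obtain ⟨a, b, rfl, rfl, hb⟩ :=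
    exists_integral_torus_coeffs_of_diagConj_eq_torus_mul hinj hϖ htm hh heq
  have hab : a ^ 2 - ε * b ^ 2 = 1 := hinj (by simpa using habk)
  obtain ⟨s, hs, hN⟩ := exists_sign_smul_torus_sub_one_dvd h2 hab hb
  obtain ⟨z, hz, hzs⟩ := SpecialLinearGroup.exists_coe_eq_smul_one hs
  have hss : s * s = 1 := by rcases hs with rfl | rfl <;> norm_num
  set N := s • !![a, b; b * ε, a]
  have hdetN : N.det = 1 := by
    simp only [N, smul_of, smul_cons, smul_eq_mul, smul_empty, det_fin_two, of_apply, cons_val',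
      cons_val_zero, cons_val_one, cons_val_fin_one]
    linear_combination s * s * hab + hss
  refine ⟨z, z * g, hz,
    ⟨⟨N * h, by rw [det_mul, hdetN, h.prop, one_mul]⟩, dvd_mul_sub_one hN hh, ?_⟩, ?_⟩
  · have hzg : ((z * g : SpecialLinearGroup (Fin 2) R) : Matrix (Fin 2) (Fin 2) R) = s • g := by
      rw [Matrix.SpecialLinearGroup.coe_mul, hzs, smul_one_mul]
    have hNk : N.map (algebraMap R k) = algebraMap R k s • !![algebraMap R k a, algebraMap R k b;
        algebraMap R k b * algebraMap R k ε, algebraMap R k a] := by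
      ext i j; fin_cases i <;> fin_cases j <;> simp [N]
    show _ = (N * h).map _
    rw [hzg, map_smul' _ _ _ (map_mul _), diagConj_smul, heq, Matrix.map_mul, hNk, smul_mul]
  · have hzz : z * z = 1 := Subtype.ext (by simp [hzs, smul_smul, hss])
    rw [← mul_assoc, hzz, one_mul]

lemma exists_torus_mul_of_diagConj_mem_congruenceSubgroup {ϖ ε : R} {t m : ℕ}
    {z h : SpecialLinearGroup (Fin 2) R}
    (hz : (z : Matrix (Fin 2) (Fin 2) R) = 1 ∨ (z : Matrix (Fin 2) (Fin 2) R) = -1)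
    (hh : InCongruenceSubgroup R k ϖ m
      (diagConj (algebraMap R k ϖ) t ((h : Matrix (Fin 2) (Fin 2) R).map (algebraMap R k)))) :
    ∃ tm x : Matrix (Fin 2) (Fin 2) k,
      InUnramifiedTorus R k ε tm ∧ InCongruenceSubgroup R k ϖ m x ∧
      diagConj (algebraMap R k ϖ) t (((z * h : SpecialLinearGroup (Fin 2) R) :
        Matrix (Fin 2) (Fin 2) R).map (algebraMap R k)) = tm * x := by
  rcases hz with hz | hz
  · exact ⟨1, _, ⟨1, 0, by simp, by simp [one_fin_two]⟩, hh, by simp [hz]⟩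
  · exact ⟨-1, _, ⟨-1, 0, by simp, by simp [one_fin_two]⟩, hh,
      by simp [hz, diagConj, Matrix.map_neg (algebraMap R k) (map_neg _)]⟩

end TorusCongruence

theorem inter_conj_torus_congruence_eq_center_mul_general
    (R : Type*) [CommRing R] [IsDomain R] [IsDiscreteValuationRing R]
    (hodd : Odd (Nat.card (IsLocalRing.ResidueField R)))
    (k : Type*) [Field k] [Algebra R k] [IsFractionRing R k]
    (ϖ : R) (hϖ : Irreducible ϖ)
    (ε : Rˣ)
    (t m : ℕ) (htm : m ≤ 2 * t) :
    {g : Matrix.SpecialLinearGroup (Fin 2) R |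
      ∃ tm x : Matrix (Fin 2) (Fin 2) k,
        InUnramifiedTorus R k (↑ε) tm ∧ InCongruenceSubgroup R k ϖ m x ∧
        Matrix.diagonal ![(algebraMap R k ϖ) ^ (t : ℤ), (algebraMap R k ϖ) ^ (-(t : ℤ))] *
            ((g : Matrix (Fin 2) (Fin 2) R).map (algebraMap R k)) *
            Matrix.diagonal ![(algebraMap R k ϖ) ^ (-(t : ℤ)), (algebraMap R k ϖ) ^ (t : ℤ)] =
          tm * x} =
    {g : Matrix.SpecialLinearGroup (Fin 2) R |
      ∃ z h : Matrix.SpecialLinearGroup (Fin 2) R,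
        ((z : Matrix (Fin 2) (Fin 2) R) = 1 ∨ (z : Matrix (Fin 2) (Fin 2) R) = -1) ∧
        InCongruenceSubgroup R k ϖ m
          (Matrix.diagonal ![(algebraMap R k ϖ) ^ (t : ℤ), (algebraMap R k ϖ) ^ (-(t : ℤ))] *
            ((h : Matrix (Fin 2) (Fin 2) R).map (algebraMap R k)) *
            Matrix.diagonal ![(algebraMap R k ϖ) ^ (-(t : ℤ)), (algebraMap R k ϖ) ^ (t : ℤ)]) ∧
        g = z * h} := by
  have h2 : IsUnit (2 : R) := IsLocalRing.isUnit_two_of_odd_card_residueField hodd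
  ext g
  constructor
  · rintro ⟨tm, x, htorus, hx, heq⟩
    exact exists_center_mul_of_diagConj_eq_torus_mul h2 (IsFractionRing.injective R k)
      hϖ.ne_zero htm htorus hx heq
  · rintro ⟨z, h, hz, hh, rfl⟩
    exact exists_torus_mul_of_diagConj_mem_congruenceSubgroup hz hh

/-- With `α = diag(ϖ^{-t}, ϖ^{t})`, `T = T_{1,ε}` unramified and `2t ≥ m ≥ 1`:
`K ∩ (T·K_m)^α = Z · (K ∩ K_m^α)` where `Z = {±I}`. -/
theorem inter_conj_torus_congruence_eq_center_mul
    (R : Type*) [CommRing R] [IsDomain R] [IsDiscreteValuationRing R]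
    [IsAdicComplete (IsLocalRing.maximalIdeal R) R]
    [Finite (IsLocalRing.ResidueField R)]
    (hodd : Odd (Nat.card (IsLocalRing.ResidueField R)))
    (k : Type*) [Field k] [Algebra R k] [IsFractionRing R k]
    (ϖ : R) (hϖ : Irreducible ϖ)
    (ε : Rˣ) (hε : ¬ IsSquare (IsLocalRing.residue R (↑ε : R)))
    (t m : ℕ) (ht : 1 ≤ t) (hm : 1 ≤ m) (htm : m ≤ 2 * t) :
    {g : Matrix.SpecialLinearGroup (Fin 2) R |
      ∃ tm x : Matrix (Fin 2) (Fin 2) k,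
        InUnramifiedTorus R k (↑ε) tm ∧ InCongruenceSubgroup R k ϖ m x ∧
        Matrix.diagonal ![(algebraMap R k ϖ) ^ (t : ℤ), (algebraMap R k ϖ) ^ (-(t : ℤ))] *
            ((g : Matrix (Fin 2) (Fin 2) R).map (algebraMap R k)) *
            Matrix.diagonal ![(algebraMap R k ϖ) ^ (-(t : ℤ)), (algebraMap R k ϖ) ^ (t : ℤ)] =
          tm * x} =
    {g : Matrix.SpecialLinearGroup (Fin 2) R |
      ∃ z h : Matrix.SpecialLinearGroup (Fin 2) R,
        ((z : Matrix (Fin 2) (Fin 2) R) = 1 ∨ (z : Matrix (Fin 2) (Fin 2) R) = -1) ∧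
        InCongruenceSubgroup R k ϖ m
          (Matrix.diagonal ![(algebraMap R k ϖ) ^ (t : ℤ), (algebraMap R k ϖ) ^ (-(t : ℤ))] *
            ((h : Matrix (Fin 2) (Fin 2) R).map (algebraMap R k)) *
            Matrix.diagonal ![(algebraMap R k ϖ) ^ (-(t : ℤ)), (algebraMap R k ϖ) ^ (t : ℤ)]) ∧
        g = z * h} :=
  inter_conj_torus_congruence_eq_center_mul_general R hodd k ϖ hϖ ε t m htm
end

section
/- Let u, u' ∈ k^× and v, v' ∈ k with δ = u^{-1}v ∈ P and δ' = u'^{-1}v' ∈ P, and suppose δ ≠ δ' with n = val(δ − δ') ≥ 1. Let b ∈ R and let a, a' ∈ R satisfy a² = 1 + b²δ, a'² = 1 + b²δ', and a ≡ a' mod P. Then the matrices t = [[a, b],[bδ, a]] and t' = [[a', b],[bδ', a']] lie in SL₂(R), and t^{-1}·t' ≡ I mod P^{n} (i.e., t^{-1}t' lies in the principal congruence subgroup K_n). -/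
/-!
Since `δ ∈ P`, `a² ≡ 1 mod P`, so `a` is a unit; as `a ≡ a' mod P` and `2` is a unit (the residue
field has odd order), `a + a' ≡ 2a` is a unit too. Hence `(a - a')(a + a') = b²(δ - δ')` forces
`ϖⁿ ∣ a - a'`. Finally every entry of `t⁻¹t' - 1` is an `R`-combination of `a - a'` and `δ - δ'`.
-/

theorem two_ne_zero_of_odd_natCard {κ : Type*} [Ring κ] [Nontrivial κ]
    (hodd : Odd (Nat.card κ)) : (2 : κ) ≠ 0 := by
  intro h2
  have horder : addOrderOf (1 : κ) = 2 :=
    addOrderOf_eq_prime (by rw [two_nsmul, one_add_one_eq_two, h2]) one_ne_zero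
  exact Nat.not_even_iff_odd.mpr hodd (even_iff_two_dvd.mpr (horder ▸ addOrderOf_dvd_natCard 1))

namespace IsLocalRing

variable {R : Type*} [CommRing R] [IsLocalRing R]

theorem isUnit_of_sq_eq_one_add {a x : R} (hx : x ∈ maximalIdeal R) (h : a ^ 2 = 1 + x) :
    IsUnit a := by
  rw [← residue_ne_zero_iff_isUnit]
  intro h0
  have hres := congrArg (residue R) h
  simp [h0, (residue_eq_zero_iff x).mpr hx] at hres

theorem isUnit_add_of_sub_mem_maximalIdeal (hodd : Odd (Nat.card (ResidueField R))) {a a' : R}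
    (ha : IsUnit a) (h : a - a' ∈ maximalIdeal R) : IsUnit (a + a') := by
  rw [← residue_ne_zero_iff_isUnit] at ha ⊢
  have hres : residue R a = residue R a' :=
    sub_eq_zero.mp (by rw [← map_sub, residue_eq_zero_iff]; exact h)
  rw [map_add, ← hres, ← two_mul]
  exact mul_ne_zero (two_ne_zero_of_odd_natCard hodd) ha

end IsLocalRing

theorem dvd_sub_of_dvd_sq_sub_sq {R : Type*} [CommRing R] {a a' c : R} (hu : IsUnit (a + a'))
    (h : c ∣ a ^ 2 - a' ^ 2) : c ∣ a - a' :=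
  hu.dvd_mul_right.mp (by rwa [mul_comm, ← sq_sub_sq])

namespace Matrix

variable {R : Type*} [CommRing R] {a a' b δ δ' : R}

theorem det_of_sq_eq_one_add (h : a ^ 2 = 1 + b ^ 2 * δ) : !![a, b; b * δ, a].det = 1 := by
  rw [det_fin_two_of]
  linear_combination h

theorem inv_of_sq_eq_one_add (h : a ^ 2 = 1 + b ^ 2 * δ) :
    !![a, b; b * δ, a]⁻¹ = !![a, -b; -(b * δ), a] := by
  rw [inv_def, det_of_sq_eq_one_add h, adjugate_fin_two_of, Ring.inverse_one, one_smul]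

theorem dvd_inv_mul_sub_one_apply {c : R} (ha : a ^ 2 = 1 + b ^ 2 * δ)
    (ha' : a' ^ 2 = 1 + b ^ 2 * δ') (hca : c ∣ a - a') (hcδ : c ∣ δ - δ') (i j : Fin 2) :
    c ∣ (!![a, b; b * δ, a]⁻¹ * !![a', b; b * δ', a'] - 1) i j := by
  obtain ⟨d, hd⟩ := hca
  obtain ⟨e, he⟩ := hcδ
  rw [inv_of_sq_eq_one_add ha]
  fin_cases i <;> fin_cases j <;> simp
  · exact ⟨a' * d, by linear_combination a' * hd + ha'⟩
  · exact ⟨b * d, by linear_combination b * hd⟩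
  · exact ⟨b * (δ' * d - a' * e), by linear_combination b * δ' * hd - a' * b * he⟩
  · exact ⟨-(a * d), by linear_combination (-a) * hd + ha⟩

end Matrix

theorem transfer_congruence_general
    (R : Type*) [CommRing R] [IsDomain R] [IsDiscreteValuationRing R]
    (hodd : Odd (Nat.card (IsLocalRing.ResidueField R)))
    (ϖ : R) (hϖ : Irreducible ϖ)
    (δ δ' : R) (hδmem : δ ∈ IsLocalRing.maximalIdeal R)
    (n : ℕ) (wn : Rˣ) (hval : δ - δ' = ϖ ^ n * (↑wn : R))
    (a a' b : R) (ha : a ^ 2 = 1 + b ^ 2 * δ) (ha' : a' ^ 2 = 1 + b ^ 2 * δ')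
    (hcong : ϖ ∣ (a - a')) :
    (!![a, b; b * δ, a] : Matrix (Fin 2) (Fin 2) R).det = 1 ∧
    (!![a', b; b * δ', a'] : Matrix (Fin 2) (Fin 2) R).det = 1 ∧
    (∀ i j, ϖ ^ n ∣
      (((!![a, b; b * δ, a] : Matrix (Fin 2) (Fin 2) R))⁻¹ *
        (!![a', b; b * δ', a'] : Matrix (Fin 2) (Fin 2) R) - 1) i j) := by
  have hϖmem : ϖ ∈ IsLocalRing.maximalIdeal R :=
    (IsLocalRing.mem_maximalIdeal ϖ).mpr hϖ.not_isUnit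
  have haUnit : IsUnit a :=
    IsLocalRing.isUnit_of_sq_eq_one_add (Ideal.mul_mem_left _ _ hδmem) ha
  have hsumUnit : IsUnit (a + a') := IsLocalRing.isUnit_add_of_sub_mem_maximalIdeal hodd haUnit
    ((IsLocalRing.maximalIdeal R).mem_of_dvd hcong hϖmem)
  have hδdvd : ϖ ^ n ∣ δ - δ' := ⟨wn, hval⟩
  have hadvd : ϖ ^ n ∣ a - a' := dvd_sub_of_dvd_sq_sub_sq hsumUnit <| by
    rw [ha, ha', show 1 + b ^ 2 * δ - (1 + b ^ 2 * δ') = b ^ 2 * (δ - δ') by ring]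
    exact hδdvd.mul_left _
  exact ⟨Matrix.det_of_sq_eq_one_add ha, Matrix.det_of_sq_eq_one_add ha',
    Matrix.dvd_inv_mul_sub_one_apply ha ha' hadvd hδdvd⟩

/-- Transfer congruence: with `δ = u⁻¹v, δ' = u'⁻¹v' ∈ P`, `n = val(δ − δ') ≥ 1`,
`a² = 1 + b²δ`, `a'² = 1 + b²δ'` and `a ≡ a' mod P`, the matrices
`t = [[a,b],[bδ,a]]` and `t' = [[a',b],[bδ',a']]` lie in `SL₂(R)` and
`t⁻¹·t' ≡ I mod P^n`. -/
theorem transfer_congruence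
    (R : Type*) [CommRing R] [IsDomain R] [IsDiscreteValuationRing R]
    [IsAdicComplete (IsLocalRing.maximalIdeal R) R]
    [Finite (IsLocalRing.ResidueField R)]
    (hodd : Odd (Nat.card (IsLocalRing.ResidueField R)))
    (k : Type*) [Field k] [Algebra R k] [IsFractionRing R k]
    (ϖ : R) (hϖ : Irreducible ϖ)
    (u u' : k) (hu : u ≠ 0) (hu' : u' ≠ 0) (v v' : k)
    (δ δ' : R) (hδmem : δ ∈ IsLocalRing.maximalIdeal R)
    (hδ'mem : δ' ∈ IsLocalRing.maximalIdeal R)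
    (hδ : algebraMap R k δ = u⁻¹ * v) (hδ' : algebraMap R k δ' = u'⁻¹ * v')
    (hne : δ ≠ δ') (n : ℕ) (hn : 1 ≤ n) (wn : Rˣ) (hval : δ - δ' = ϖ ^ n * (↑wn : R))
    (a a' b : R) (ha : a ^ 2 = 1 + b ^ 2 * δ) (ha' : a' ^ 2 = 1 + b ^ 2 * δ')
    (hcong : ϖ ∣ (a - a')) :
    (!![a, b; b * δ, a] : Matrix (Fin 2) (Fin 2) R).det = 1 ∧
    (!![a', b; b * δ', a'] : Matrix (Fin 2) (Fin 2) R).det = 1 ∧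
    (∀ i j, ϖ ^ n ∣
      (((!![a, b; b * δ, a] : Matrix (Fin 2) (Fin 2) R))⁻¹ *
        (!![a', b; b * δ', a'] : Matrix (Fin 2) (Fin 2) R) - 1) i j) :=
  transfer_congruence_general R hodd ϖ hϖ δ δ' hδmem n wn hval a a' b ha ha' hcong
end
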